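/- arXiv:math/9912058 — 11 statements merged into one kernel-verified Lean document; each statement's English description precedes it below -/
import Mathlib

section
/- Let A be a commutative integral domain with fraction field K, let I be an ideal of A, and let f = f₁·f₂ ∈ I with f, f₁, f₂ all nonzero. Let I₁ be the ideal of A generated by I together with f₁, and let A¹ = A[I₁/f₁] ⊆ K. Let I² be the ideal of A¹ generated by the elements b/f₁ for b ∈ I (these lie in A¹ since I ⊆ I₁), and note f₂ = f/f₁ ∈ I². Then A[I/f] = A¹[I²/f₂], i.e. the A¹-subalgebra of K generated by the fractions c/f₂ with c ∈ I² equals the affine modification A[I/f]. -/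
/-! Since `b/f₁ = (b f₂)/f` and `(a f₁)/f₁ = a`, the algebra `A¹` already lies in `A[I/f]`.
An affine modification only depends on generators of the ideal, and the generators `b/f₁` of
`I²` divided by `f₂` are exactly the fractions `b/f` with `b ∈ I`. So `A¹[I²/f₂]`, which over `A`
is generated by `A¹` together with these fractions, is `A[I/f]`. -/

/-- The affine modification `B[J/g]` of a domain `B` inside a field `K` containing `B`:
the `B`-subalgebra of `K` generated by the fractions `b/g` with `b ∈ J`. -/
def affineModification (B K : Type*) [CommRing B] [Field K] [Algebra B K]
    (J : Ideal B) (g : B) : Subalgebra B K :=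
  Algebra.adjoin B ((fun b => algebraMap B K b / algebraMap B K g) '' (J : Set B))

namespace affineModification

variable {B K : Type*} [CommRing B] [Field K] [Algebra B K]

theorem div_mem {J : Ideal B} (g : B) {b : B} (hb : b ∈ J) :
    algebraMap B K b / algebraMap B K g ∈ affineModification B K J g :=
  Algebra.subset_adjoin ⟨b, hb, rfl⟩

theorem le_iff {J : Ideal B} {g : B} {S : Subalgebra B K} :
    affineModification B K J g ≤ S ↔
      ∀ b ∈ J, algebraMap B K b / algebraMap B K g ∈ S := by
  simp [affineModification, Algebra.adjoin_le_iff, Set.subset_def]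

theorem span_eq (s : Set B) (g : B) :
    affineModification B K (Ideal.span s) g =
      Algebra.adjoin B ((fun b => algebraMap B K b / algebraMap B K g) '' s) := by
  refine le_antisymm (le_iff.mpr fun b hb => ?_)
    (Algebra.adjoin_mono (Set.image_mono Ideal.subset_span))
  have hb' := Submodule.mem_map_of_mem
    (f := (LinearMap.mulRight B (algebraMap B K g)⁻¹).comp (Algebra.linearMap B K)) hb
  rw [Ideal.span, Submodule.map_span] at hb'
  simpa [div_eq_mul_inv, Function.comp_def] using Algebra.span_le_adjoin B _ hb'

theorem sup_span_singleton_self {J : Ideal B} {g : B} (hg : algebraMap B K g ≠ 0) :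
    affineModification B K (J ⊔ Ideal.span {g}) g = affineModification B K J g := by
  refine le_antisymm (le_iff.mpr fun b hb => ?_)
    (le_iff.mpr fun b hb => div_mem g (Ideal.mem_sup_left hb))
  obtain ⟨c, hc, _, hcg, rfl⟩ := Submodule.mem_sup.mp hb
  obtain ⟨a, rfl⟩ := Ideal.mem_span_singleton'.mp hcg
  rw [map_add, add_div, map_mul, mul_div_cancel_right₀ _ hg]
  exact add_mem (div_mem g hc) (Subalgebra.algebraMap_mem _ a)

theorem le_mul {J : Ideal B} (g : B) {h : B} (hh : algebraMap B K h ≠ 0) :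
    affineModification B K J g ≤ affineModification B K J (g * h) :=
  le_iff.mpr fun b hb => by
    rw [← mul_div_mul_right _ _ hh, ← map_mul, ← map_mul]
    exact div_mem _ (J.mul_mem_right h hb)

end affineModification

theorem stmt2_general (A K : Type*) [CommRing A] [Field K] [Algebra A K]
    [IsFractionRing A K] (I : Ideal A) (f f₁ f₂ : A) (hmul : f = f₁ * f₂)
    (hf₁ : f₁ ≠ 0) (hf₂ : f₂ ≠ 0) :
    (affineModification A K I f : Set K) =
      (affineModification (↥(affineModification A K (I ⊔ Ideal.span {f₁}) f₁)) K
        (Ideal.span {x : ↥(affineModification A K (I ⊔ Ideal.span {f₁}) f₁) |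
          ∃ b ∈ I, (x : K) = algebraMap A K b / algebraMap A K f₁})
        ⟨algebraMap A K f₂, Subalgebra.algebraMap_mem _ f₂⟩ : Set K) := by
  have hf₁K : algebraMap A K f₁ ≠ 0 := (map_ne_zero_iff _ (IsFractionRing.injective A K)).mpr hf₁
  have hf₂K : algebraMap A K f₂ ≠ 0 := (map_ne_zero_iff _ (IsFractionRing.injective A K)).mpr hf₂
  have hA₁ : affineModification A K (I ⊔ Ideal.span {f₁}) f₁ ≤ affineModification A K I f := by
    rw [affineModification.sup_span_singleton_self hf₁K, hmul]
    exact affineModification.le_mul f₁ hf₂K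
  set A₁ := affineModification A K (I ⊔ Ideal.span {f₁}) f₁
  have hgen : (fun x : A₁ => algebraMap A₁ K x /
        algebraMap A₁ K ⟨algebraMap A K f₂, Subalgebra.algebraMap_mem _ f₂⟩) ''
      {x : A₁ | ∃ b ∈ I, (x : K) = algebraMap A K b / algebraMap A K f₁} =
      (fun b => algebraMap A K b / algebraMap A K f) '' I := by
    have hfK : algebraMap A K f = algebraMap A K f₁ * algebraMap A K f₂ := by rw [hmul, map_mul]
    ext z
    constructor
    · rintro ⟨x, ⟨b, hb, hx⟩, rfl⟩
      exact ⟨b, hb, by simp [hx, div_div, hfK]⟩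
    · rintro ⟨b, hb, rfl⟩
      exact ⟨⟨_, affineModification.div_mem f₁ (Ideal.mem_sup_left hb)⟩, ⟨b, hb, rfl⟩,
        by simp [div_div, hfK]⟩
  rw [affineModification.span_eq, hgen,
    ← Subalgebra.coe_restrictScalars A (U := Algebra.adjoin A₁ _), Algebra.restrictScalars_adjoin]
  congr 1
  exact le_antisymm (Algebra.adjoin_mono Set.subset_union_right)
    (Algebra.adjoin_le (Set.union_subset hA₁ Algebra.subset_adjoin))

/-- **Theorem 2.1(3)**: factorization of an affine modification through a partial
modification.  If `f = f₁·f₂ ∈ I`, `I₁ = (I, f₁)`, `A¹ = A[I₁/f₁]`, and `I²` is the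
ideal of `A¹` generated by `I/f₁`, then `A[I/f] = A¹[I²/f₂]` (as subrings of the
fraction field `K`). -/
theorem stmt2 (A K : Type*) [CommRing A] [IsDomain A] [Field K] [Algebra A K]
    [IsFractionRing A K] (I : Ideal A) (f f₁ f₂ : A) (hmul : f = f₁ * f₂) (hfI : f ∈ I)
    (hf : f ≠ 0) (hf₁ : f₁ ≠ 0) (hf₂ : f₂ ≠ 0) :
    (affineModification A K I f : Set K) =
      (affineModification (↥(affineModification A K (I ⊔ Ideal.span {f₁}) f₁)) K
        (Ideal.span {x : ↥(affineModification A K (I ⊔ Ideal.span {f₁}) f₁) |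
          ∃ b ∈ I, (x : K) = algebraMap A K b / algebraMap A K f₁})
        ⟨algebraMap A K f₂, Subalgebra.algebraMap_mem _ f₂⟩ : Set K) :=
  stmt2_general A K I f f₁ f₂ hmul hf₁ hf₂
end

section
/- Let A be a finitely generated ℂ-algebra which is an integral domain, with fraction field K, let g ∈ A be nonzero, n ≥ 1, and let I be the ideal of A generated by b₀ = gⁿ, b₁, …, b_s. Let A' = A[I/gⁿ] ⊆ K and suppose that in A' the radical of the principal ideal generated by g equals the principal ideal generated by g. Let A₁ = A[√I/g] ⊆ K (which is contained in A'), and let K₁ be the ideal of A₁ generated by g^{n-1} and the elements b₁/g, …, b_s/g (which lie in A₁ since each b_i ∈ √I). Then A' = A₁[K₁/g^{n-1}], i.e. the A₁-subalgebra of K generated by the fractions c/g^{n-1} with c ∈ K₁ equals A'; in other words the inclusion A₁ ⊆ A' is an affine modification with locus (K₁, g^{n-1}). -/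
/-!
Since `√(gA') = gA'` and `I` maps into `gⁿA' ⊆ gA'`, every `c ∈ √I` is divisible by `g` in `A'`,
so `A₁ = A[√I/g] ⊆ A'`. Both sides of the claimed equality are then rings between `A₁` and `K`
generated by fractions over generating sets of ideals, and the generators match:
`gⁿ/gⁿ = g^{n-1}/g^{n-1} = 1` and `bᵢ/gⁿ = (bᵢ/g)/g^{n-1}`.
-/

section AffineModification

variable {A K : Type*} [CommRing A] [Field K] [Algebra A K] {R : Type*} [CommRing R] [Algebra R K]

theorem div_mem_affineModification {J : Ideal A} {f x : A} (hx : x ∈ J) :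
    algebraMap A K x / algebraMap A K f ∈ affineModification A K J f :=
  Algebra.subset_adjoin ⟨x, hx, rfl⟩

theorem affineModification_subset {J : Ideal A} {f : A} {S : Subalgebra R K}
    (hA : ∀ a, algebraMap A K a ∈ S)
    (hJ : ∀ x ∈ J, algebraMap A K x / algebraMap A K f ∈ S) :
    (affineModification A K J f : Set K) ⊆ S := by
  rw [← S.coe_toSubring, ← Subalgebra.coe_toSubring, affineModification,
    Algebra.adjoin_eq_ring_closure]
  refine Subring.closure_le.mpr (Set.union_subset ?_ ?_)
  · rintro _ ⟨a, rfl⟩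
    exact hA a
  · rintro _ ⟨x, hx, rfl⟩
    exact hJ x hx

theorem div_mem_of_mem_span {T : Set A} {f x : A} {S : Subalgebra R K}
    (hA : ∀ a, algebraMap A K a ∈ S)
    (hT : ∀ t ∈ T, algebraMap A K t / algebraMap A K f ∈ S) (hx : x ∈ Ideal.span T) :
    algebraMap A K x / algebraMap A K f ∈ S := by
  induction hx using Submodule.span_induction with
  | mem t ht => exact hT t ht
  | zero => simp
  | add x y _ _ hx hy => simpa only [map_add, add_div] using S.add_mem hx hy
  | smul a x _ hx => simpa only [smul_eq_mul, map_mul, mul_div_assoc] using S.mul_mem (hA a) hx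

theorem affineModification_span_subset {T : Set A} {f : A} {S : Subalgebra R K}
    (hA : ∀ a, algebraMap A K a ∈ S)
    (hT : ∀ t ∈ T, algebraMap A K t / algebraMap A K f ∈ S) :
    (affineModification A K (Ideal.span T) f : Set K) ⊆ S :=
  affineModification_subset hA fun _ hx => div_mem_of_mem_span hA hT hx

theorem div_mem_of_mem_span_singleton {S : Subalgebra A K} {y h : S}
    (hy : y ∈ Ideal.span {h}) : (y : K) / h ∈ S := by
  obtain ⟨d, rfl⟩ := Ideal.mem_span_singleton'.mp hy
  rcases eq_or_ne (h : K) 0 with h0 | h0 <;> simp [h0]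

theorem algebraMap_mem_span_singleton_of_mem {J : Ideal A} {f x : A}
    (hf : algebraMap A K f ≠ 0) (hx : x ∈ J) :
    algebraMap A (affineModification A K J f) x ∈
      Ideal.span {algebraMap A (affineModification A K J f) f} :=
  Ideal.mem_span_singleton'.mpr
    ⟨⟨_, div_mem_affineModification hx⟩, Subtype.ext (div_mul_cancel₀ _ hf)⟩

theorem affineModification_radical_le {J : Ideal A} {g : A} {n : ℕ} (hn : n ≠ 0)
    (hg : algebraMap A K g ≠ 0)
    (hE : (Ideal.span {algebraMap A (affineModification A K J (g ^ n)) g}).radical =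
      Ideal.span {algebraMap A (affineModification A K J (g ^ n)) g}) :
    affineModification A K J.radical g ≤ affineModification A K J (g ^ n) := by
  set g' := algebraMap A (affineModification A K J (g ^ n)) g
  refine Algebra.adjoin_le ?_
  rintro _ ⟨c, ⟨m, hm⟩, rfl⟩
  have hcm : algebraMap A _ c ^ m ∈ Ideal.span {g'} := by
    have hgn : Ideal.span {g' ^ n} ≤ Ideal.span {g'} :=
      Ideal.span_singleton_le_span_singleton.mpr (dvd_pow_self g' hn)
    have hgnK : algebraMap A K (g ^ n) ≠ 0 := by simpa using pow_ne_zero n hg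
    have hcmJ := algebraMap_mem_span_singleton_of_mem hgnK hm
    rw [map_pow, map_pow] at hcmJ
    exact hgn hcmJ
  have hc : algebraMap A _ c ∈ Ideal.span {g'} := hE ▸ ⟨m, hcm⟩
  simpa [g'] using div_mem_of_mem_span_singleton hc

end AffineModification

theorem stmt5_general (A K : Type*) [CommRing A] [Field K] [Algebra A K] [IsFractionRing A K]
    (g : A) (hg : g ≠ 0) (n : ℕ) (hn : 1 ≤ n) (s : ℕ) (b : Fin s → A)
    (I : Ideal A) (hI : I = Ideal.span (insert (g ^ n) (Set.range b)))
    (g' : ↥(affineModification A K I (g ^ n))) (hg' : (g' : K) = algebraMap A K g)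
    (hE : (Ideal.span {g'}).radical = Ideal.span {g'}) :
    (affineModification (↥(affineModification A K I.radical g)) K
        (Ideal.span ({x : ↥(affineModification A K I.radical g) |
            (x : K) = algebraMap A K (g ^ (n - 1))} ∪
          {x : ↥(affineModification A K I.radical g) |
            ∃ i, (x : K) = algebraMap A K (b i) / algebraMap A K g}))
        ⟨algebraMap A K (g ^ (n - 1)), Subalgebra.algebraMap_mem _ _⟩ : Set K) =
      (affineModification A K I (g ^ n) : Set K) := by
  have hgK : algebraMap A K g ≠ 0 := by rwa [ne_eq, IsFractionRing.to_map_eq_zero_iff]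
  have hgn : algebraMap A K (g ^ n) = algebraMap A K g * algebraMap A K (g ^ (n - 1)) := by
    rw [← map_mul, ← pow_succ', Nat.sub_add_cancel hn]
  have hgnK : algebraMap A K (g ^ n) ≠ 0 := by simpa using pow_ne_zero n hgK
  have hgn1K : algebraMap A K (g ^ (n - 1)) ≠ 0 := by simpa using pow_ne_zero (n - 1) hgK
  obtain rfl : g' = algebraMap A _ g := Subtype.ext hg'
  have hA₁ := affineModification_radical_le (Nat.one_le_iff_ne_zero.mp hn) hgK hE
  have hbI (i : Fin s) : b i ∈ I := hI ▸ Ideal.subset_span (Set.mem_insert_of_mem _ ⟨i, rfl⟩)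
  have hβ (i : Fin s) : algebraMap A K (b i) / algebraMap A K g ∈
      affineModification A K I.radical g :=
    div_mem_affineModification (Ideal.le_radical (hbI i))
  refine Set.Subset.antisymm (affineModification_span_subset (fun a => hA₁ a.2) ?_) ?_
  · rintro x (hx | ⟨i, hx⟩) <;> change (x : K) / algebraMap A K (g ^ (n - 1)) ∈ _ <;> rw [hx]
    · rw [div_self hgn1K]
      exact one_mem _
    · rw [div_div, ← hgn]
      exact div_mem_affineModification (hbI i)
  · refine affineModification_subset ?hA fun x hx => div_mem_of_mem_span ?hA ?_ (hI ▸ hx)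
    case hA => exact fun a => Subalgebra.algebraMap_mem _ (algebraMap A _ a)
    rintro _ (rfl | ⟨i, rfl⟩)
    · rw [div_self hgnK]
      exact one_mem _
    · rw [hgn, ← div_div]
      exact div_mem_affineModification (x := (⟨_, hβ i⟩ : affineModification A K I.radical g))
        (Ideal.subset_span (Set.mem_union_right _ ⟨i, rfl⟩))

/-- **Corollary 2.1**: let `A` be a finitely generated `ℂ`-algebra domain with fraction
field `K`, let `I = (gⁿ, b₁, …, b_s)`, `A' = A[I/gⁿ]`, and suppose the radical of `gA'`
equals `gA'`.  Let `A₁ = A[√I/g] ⊆ A'` and let `K₁` be the ideal of `A₁` generated by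
`g^{n-1}` and `b₁/g, …, b_s/g`.  Then `A' = A₁[K₁/g^{n-1}]`, i.e. `A₁ ⊆ A'` is an affine
modification with locus `(K₁, g^{n-1})`. -/
theorem stmt5 (A K : Type*) [CommRing A] [IsDomain A] [Algebra ℂ A]
    [Algebra.FiniteType ℂ A] [Field K] [Algebra A K] [IsFractionRing A K]
    (g : A) (hg : g ≠ 0) (n : ℕ) (hn : 1 ≤ n) (s : ℕ) (b : Fin s → A)
    (I : Ideal A) (hI : I = Ideal.span (insert (g ^ n) (Set.range b)))
    (g' : ↥(affineModification A K I (g ^ n))) (hg' : (g' : K) = algebraMap A K g)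
    (hE : (Ideal.span {g'}).radical = Ideal.span {g'}) :
    (affineModification (↥(affineModification A K I.radical g)) K
        (Ideal.span ({x : ↥(affineModification A K I.radical g) |
            (x : K) = algebraMap A K (g ^ (n - 1))} ∪
          {x : ↥(affineModification A K I.radical g) |
            ∃ i, (x : K) = algebraMap A K (b i) / algebraMap A K g}))
        ⟨algebraMap A K (g ^ (n - 1)), Subalgebra.algebraMap_mem _ _⟩ : Set K) =
      (affineModification A K I (g ^ n) : Set K) :=
  stmt5_general A K g hg n hn s b I hI g' hg' hE
end

section
/- Let A be a unique factorization domain with fraction field K, let g ∈ A be irreducible, n ≥ 1, f = gⁿ, let I be an ideal of A with f ∈ I, and let A' = A[I/f] ⊆ K. Assume (ii) I is the f-largest ideal of the modification, i.e. I = I_f = {a ∈ A : a/f ∈ A'}, and (iii) 1/f ∉ A' (equivalently A' ≠ A[1/f], i.e. the exceptional divisor is nonempty). Then: (1) the image of g in A' is an irreducible element of A'; and (2) if A' is also a unique factorization domain, then the principal ideal gA' of A' is a prime ideal equal to its own radical (the exceptional divisor is irreducible and its defining ideal in A' is the principal ideal generated by g). -/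
/-- **Proposition 2.4**: let `A` be a UFD with fraction field `K`, `g ∈ A` irreducible,
`f = gⁿ ∈ I`, and `A' = A[I/f]`.  Assume (ii) `I` is the `f`-largest ideal of the
modification (`a/f ∈ A' ↔ a ∈ I`), and (iii) `1/f ∉ A'` (the exceptional divisor is
nonempty).  Then (1) `g` is irreducible as an element of `A'`, and (2) if `A'` is also a
UFD then the principal ideal `gA'` is prime and equal to its own radical (the
exceptional divisor is irreducible with defining ideal generated by `g`). -/
theorem stmt6 (A K : Type*) [CommRing A] [IsDomain A] [UniqueFactorizationMonoid A]
    [Field K] [Algebra A K] [IsFractionRing A K]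
    (g : A) (hgirr : Irreducible g) (n : ℕ) (hn : 1 ≤ n)
    (I : Ideal A) (hfI : g ^ n ∈ I)
    (hIf : ∀ a : A, algebraMap A K a / algebraMap A K (g ^ n) ∈
      affineModification A K I (g ^ n) ↔ a ∈ I)
    (hne : (algebraMap A K (g ^ n))⁻¹ ∉ affineModification A K I (g ^ n))
    (g' : ↥(affineModification A K I (g ^ n))) (hg' : (g' : K) = algebraMap A K g) :
    Irreducible g' ∧
    (UniqueFactorizationMonoid ↥(affineModification A K I (g ^ n)) →
      (Ideal.span {g'}).IsPrime ∧ (Ideal.span {g'}).radical = Ideal.span {g'}) := by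
  have hinj : Function.Injective (algebraMap A K) := IsFractionRing.injective A K
  have hg0 : g ≠ 0 := hgirr.ne_zero
  have hgK : algebraMap A K g ≠ 0 := fun h => hg0 (hinj (by simpa using h))
  have hgKp : ∀ m : ℕ, algebraMap A K (g ^ m) ≠ 0 := by
    intro m; rw [map_pow]; exact pow_ne_zero _ hgK
  have hgprime : Prime g := hgirr.prime
  -- every element of A' has the form a / f^m
  have hform : ∀ x ∈ affineModification A K I (g ^ n), ∃ (m : ℕ) (a : A),
      x * (algebraMap A K (g ^ n)) ^ m = algebraMap A K a := by
    intro x hx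
    induction hx using Algebra.adjoin_induction with
    | mem x hx =>
        obtain ⟨b, _, rfl⟩ := hx
        exact ⟨1, b, by field_simp⟩
    | algebraMap r => exact ⟨0, r, by simp⟩
    | add x y hx hy ihx ihy =>
        obtain ⟨m₁, a₁, h₁⟩ := ihx
        obtain ⟨m₂, a₂, h₂⟩ := ihy
        refine ⟨m₁ + m₂, a₁ * (g ^ n) ^ m₂ + a₂ * (g ^ n) ^ m₁, ?_⟩
        rw [map_add, map_mul, map_mul, ← h₁, ← h₂]
        simp only [map_pow]
        ring
    | mul x y hx hy ihx ihy =>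
        obtain ⟨m₁, a₁, h₁⟩ := ihx
        obtain ⟨m₂, a₂, h₂⟩ := ihy
        refine ⟨m₁ + m₂, a₁ * a₂, ?_⟩
        rw [map_mul, ← h₁, ← h₂]; ring
  -- if z ∈ A' and z = v / g^M with v a unit of A, then z is a unit of A'
  have hunit : ∀ (z : ↥(affineModification A K I (g ^ n))) (v : Aˣ) (M : ℕ),
      (z : K) * algebraMap A K (g ^ M * v) = 1 → IsUnit z := by
    intro z v M hz
    rcases M with _ | M
    · rw [pow_zero, one_mul] at hz
      exact IsUnit.of_mul_eq_one (a := z)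
        ⟨algebraMap A K (v : A), Subalgebra.algebraMap_mem _ _⟩
        (Subtype.ext (by push_cast; exact hz))
    · -- contradiction with hne
      exfalso
      apply hne
      have hzn : (z : K) ^ n * algebraMap A K (g ^ (M * n) * ((v ^ n : Aˣ) : A)) *
          algebraMap A K (g ^ n) = 1 := by
        have h2 := congrArg (· ^ n) hz
        simp only [mul_pow, one_pow] at h2
        calc (z : K) ^ n * algebraMap A K (g ^ (M * n) * ((v ^ n : Aˣ) : A)) *
              algebraMap A K (g ^ n)
            = (z : K) ^ n * algebraMap A K (g ^ (M * n) * ((v ^ n : Aˣ) : A) * g ^ n) := by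
              rw [map_mul (algebraMap A K) (g ^ (M * n) * ((v ^ n : Aˣ) : A)) (g ^ n)]; ring
          _ = (z : K) ^ n * algebraMap A K ((g ^ (M + 1) * (v : A)) ^ n) := by
              congr 1
              push_cast
              ring
          _ = 1 := by rw [map_pow]; exact h2
      have hinv : (algebraMap A K (g ^ n))⁻¹ =
          (z : K) ^ n * algebraMap A K (g ^ (M * n) * ((v ^ n : Aˣ) : A)) :=
        (eq_inv_of_mul_eq_one_left hzn).symm
      rw [hinv]
      exact mul_mem (pow_mem z.2 n) (Subalgebra.algebraMap_mem _ _)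
  -- g' is not a unit
  have hnotunit : ¬ IsUnit g' := by
    intro h
    obtain ⟨u, hu⟩ := h
    apply hne
    have h0 : (g' * ↑u⁻¹ : ↥(affineModification A K I (g ^ n))) = 1 := by
      rw [← hu]; exact_mod_cast u.mul_inv
    set w : ↥(affineModification A K I (g ^ n)) := ↑u⁻¹ with hw
    have h1 : (g' : K) * (w : K) = 1 := by
      exact_mod_cast congrArg Subtype.val h0
    have h2 : algebraMap A K (g ^ n) * ((w : K)) ^ n = 1 := by
      rw [map_pow, ← hg', ← mul_pow, h1, one_pow]
    have h3 : (algebraMap A K (g ^ n))⁻¹ = (w : K) ^ n :=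
      (eq_inv_of_mul_eq_one_right h2).symm
    rw [h3]
    exact pow_mem w.2 n
  -- irreducibility, the main argument
  have hirr : Irreducible g' := by
    refine ⟨hnotunit, ?_⟩
    intro x y hxy
    have hXY : algebraMap A K g = (x : K) * (y : K) := by
      rw [← hg', hxy]; push_cast; rfl
    obtain ⟨m, a, hxa⟩ := hform (x : K) x.2
    obtain ⟨k, b, hyb⟩ := hform (y : K) y.2
    -- a * b = g ^ N with N = n*(m+k)+1
    set N : ℕ := n * (m + k) + 1 with hN
    have hab : a * b = g ^ N := by
      apply hinj
      calc algebraMap A K (a * b)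
          = algebraMap A K a * algebraMap A K b := map_mul _ _ _
        _ = ((x : K) * algebraMap A K (g ^ n) ^ m) * ((y : K) * algebraMap A K (g ^ n) ^ k) := by
            rw [hxa, hyb]
        _ = ((x : K) * (y : K)) * (algebraMap A K (g ^ n)) ^ (m + k) := by
            rw [pow_add]; ring
        _ = algebraMap A K g * algebraMap A K ((g ^ n) ^ (m + k)) := by
            rw [← hXY, ← map_pow]
        _ = algebraMap A K (g * (g ^ n) ^ (m + k)) := (map_mul _ _ _).symm
        _ = algebraMap A K (g ^ N) := by
            congr 1
            rw [hN, ← pow_mul]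
            ring
    have hadvd : a ∣ g ^ N := ⟨b, hab.symm⟩
    obtain ⟨s, hsN, u, hu⟩ := (dvd_prime_pow hgprime N).mp hadvd
    -- hu : a * u = g ^ s
    by_cases hsle : s ≤ n * m
    · -- x is a unit
      left
      refine hunit x u (n * m - s) ?_
      have key : (x : K) * algebraMap A K (g ^ (n * m - s) * (u : A)) *
          algebraMap A K (g ^ s) = 1 * algebraMap A K (g ^ s) := by
        calc (x : K) * algebraMap A K (g ^ (n * m - s) * (u : A)) * algebraMap A K (g ^ s)
            = (x : K) * algebraMap A K (g ^ (n * m - s) * (u : A) * g ^ s) := by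
              rw [map_mul (algebraMap A K) (g ^ (n * m - s) * (u : A)) (g ^ s)]; ring
          _ = (x : K) * algebraMap A K (g ^ (n * m) * (u : A)) := by
              congr 2
              rw [mul_right_comm, ← pow_add, Nat.sub_add_cancel hsle]
          _ = (x : K) * (algebraMap A K (g ^ n) ^ m * algebraMap A K (u : A)) := by
              rw [map_mul, pow_mul, map_pow]
          _ = algebraMap A K a * algebraMap A K (u : A) := by rw [← hxa]; ring
          _ = algebraMap A K (g ^ s) := by rw [← map_mul, hu]
          _ = 1 * algebraMap A K (g ^ s) := (one_mul _).symm
      exact mul_right_cancel₀ (hgKp s) key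
    · -- y is a unit
      right
      push_neg at hsle
      have hN' : N = n * m + n * k + 1 := by rw [hN]; ring
      set t : ℕ := N - s with htdef
      have hts : t + s = N := Nat.sub_add_cancel hsN
      have hNs : t ≤ n * k := by omega
      -- b * g ^ s = g ^ t * u * g ^ s
      have hb : b = g ^ t * u := by
        have h1 : b * g ^ s = (g ^ t * u) * g ^ s := by
          calc b * g ^ s = b * (a * u) := by rw [hu]
            _ = (a * b) * u := by ring
            _ = g ^ N * u := by rw [hab]
            _ = (g ^ t * u) * g ^ s := by rw [← hts, pow_add]; ring
        exact mul_right_cancel₀ (pow_ne_zero s hg0) h1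
      refine hunit y u⁻¹ (n * k - t) ?_
      have hu1 : algebraMap A K ((u⁻¹ : Aˣ) : A) * algebraMap A K (u : A) = 1 := by
        rw [← map_mul]
        norm_num
      have key : (y : K) * algebraMap A K (g ^ (n * k - t) * ((u⁻¹ : Aˣ) : A)) *
          algebraMap A K (g ^ t) = 1 * algebraMap A K (g ^ t) := by
        calc (y : K) * algebraMap A K (g ^ (n * k - t) * ((u⁻¹ : Aˣ) : A)) *
              algebraMap A K (g ^ t)
            = (y : K) * (algebraMap A K (g ^ (n * k - t)) * algebraMap A K (g ^ t)) *
              algebraMap A K ((u⁻¹ : Aˣ) : A) := by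
              rw [map_mul (algebraMap A K) (g ^ (n * k - t)) ((u⁻¹ : Aˣ) : A)]; ring
          _ = (y : K) * algebraMap A K ((g ^ n) ^ k) * algebraMap A K ((u⁻¹ : Aˣ) : A) := by
              rw [← map_mul, ← pow_add, Nat.sub_add_cancel hNs, pow_mul]
          _ = algebraMap A K b * algebraMap A K ((u⁻¹ : Aˣ) : A) := by
              rw [map_pow, ← hyb]
          _ = algebraMap A K (g ^ t) * (algebraMap A K ((u : A) * ((u⁻¹ : Aˣ) : A))) := by
              rw [hb, map_mul, map_mul]; ring
          _ = 1 * algebraMap A K (g ^ t) := by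
              norm_num
      exact mul_right_cancel₀ (hgKp t) key
  refine ⟨hirr, ?_⟩
  intro hufd
  have hg'0 : g' ≠ 0 := by
    intro h
    apply hg0
    apply hinj
    rw [← hg', h]
    simp
  have hp : Prime g' := UniqueFactorizationMonoid.irreducible_iff_prime.mp hirr
  have hspan : (Ideal.span {g'}).IsPrime := (Ideal.span_singleton_prime hg'0).mpr hp
  exact ⟨hspan, hspan.radical⟩
end

section
/- Let A be a commutative integral domain with fraction field K. For j = 1, …, k let I_j be an ideal of A and f_j ∈ I_j a nonzero element. Set f = f₁⋯f_k and let I be the ideal (f/f₁)·I₁ + … + (f/f_k)·I_k of A (the sum of the ideals generated by the products (f/f_j)·b with b ∈ I_j, where f/f_j = ∏_{i≠j} f_i ∈ A). Let A_j = A[I_j/f_j] ⊆ K. Then the affine modification A' = A[I/f] equals the subalgebra of K generated by the union A₁ ∪ … ∪ A_k, i.e. A' is the compositum of the modifications A₁, …, A_k inside K. -/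
section AffineModification

variable {B : Type*} (K : Type*) [CommRing B] [Field K] [Algebra B K]

/-- Since `b ↦ b/g` is `B`-linear, the generators of `B[(⨆ J_i)/g]` span the same submodule of `K`
as the union of the generators of the `B[J_i/g]`. -/
theorem affineModification_iSup {ι : Type*} (J : ι → Ideal B) (g : B) :
    affineModification B K (⨆ i, J i) g = ⨆ i, affineModification B K (J i) g := by
  let φ : B →ₗ[B] K := LinearMap.mulRight B (algebraMap B K g)⁻¹ ∘ₗ Algebra.linearMap B K
  have adjoin_map (J : Ideal B) :
      affineModification B K J g = Algebra.adjoin B (Submodule.map φ J) := by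
    simp only [affineModification, φ, Submodule.map_coe, div_eq_mul_inv]
    rfl
  simp only [adjoin_map]
  rw [Submodule.map_iSup, Submodule.iSup_eq_span, Algebra.adjoin_span, Algebra.adjoin_iUnion]

theorem affineModification_span_singleton_mul {c : B} (hc : algebraMap B K c ≠ 0)
    (J : Ideal B) (g : B) :
    affineModification B K (Ideal.span {c} * J) (c * g) = affineModification B K J g := by
  have hcJ : (Ideal.span {c} * J : Set B) = (c * ·) '' J := by
    ext x
    simp [Ideal.mem_span_singleton_mul]
  simp only [affineModification, hcJ, Set.image_image, map_mul, mul_div_mul_left _ _ hc]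

end AffineModification

theorem stmt8_general (A K : Type*) [CommRing A] [Field K] [Algebra A K]
    [IsFractionRing A K] (k : ℕ) (I : Fin k → Ideal A) (f : Fin k → A)
    (hf : ∀ j, f j ≠ 0) :
    affineModification A K
        (∑ j : Fin k, Ideal.span {∏ i ∈ Finset.univ.erase j, f i} * I j)
        (∏ j : Fin k, f j) =
      ⨆ j : Fin k, affineModification A K (I j) (f j) := by
  have hfK (i : Fin k) : algebraMap A K (f i) ≠ 0 :=
    (map_ne_zero_iff _ (IsFractionRing.injective A K)).mpr (hf i)
  rw [Ideal.sum_eq_sup, Finset.sup_univ_eq_iSup, affineModification_iSup]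
  refine iSup_congr fun j => ?_
  rw [← Finset.prod_erase_mul _ _ (Finset.mem_univ j)]
  exact affineModification_span_singleton_mul K (by simp [map_prod, Finset.prod_ne_zero_iff, hfK])
    (I j) (f j)

/-- **Proposition 2.6(1)** (algebraic form): let `A` be a domain with fraction field
`K`, let `I_j` be ideals of `A` with nonzero `f_j ∈ I_j` for `j = 1, …, k`, and set
`f = f₁⋯f_k` and `I = (f/f₁)·I₁ + … + (f/f_k)·I_k`.  Then the affine modification
`A[I/f]` equals the subalgebra of `K` generated by the union of the modifications
`A_j = A[I_j/f_j]`, i.e. it is their compositum (supremum) inside `K`. -/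
theorem stmt8 (A K : Type*) [CommRing A] [IsDomain A] [Field K] [Algebra A K]
    [IsFractionRing A K] (k : ℕ) (I : Fin k → Ideal A) (f : Fin k → A)
    (hfI : ∀ j, f j ∈ I j) (hf : ∀ j, f j ≠ 0) :
    affineModification A K
        (∑ j : Fin k, Ideal.span {∏ i ∈ Finset.univ.erase j, f i} * I j)
        (∏ j : Fin k, f j) =
      ⨆ j : Fin k, affineModification A K (I j) (f j) :=
  stmt8_general A K k I f hf
end

section
/- Let B be a Noetherian integral domain with fraction field K, and let b₀ = f, b₁, …, b_s be generators of an ideal J of B with f ≠ 0. Let β : B[y₁, …, y_s] → K be the B-algebra homomorphism from the polynomial ring in s variables sending y_i to b_i/f, whose image is the affine modification B[J/f] = B[b₁/f, …, b_s/f], and let J' be the ideal of B[y₁, …, y_s] generated by the elements L_i = f·y_i − b_i for i = 1, …, s (which all lie in ker β). Then ker β coincides with J' if and only if J' is a prime ideal. Moreover, J' is prime whenever the sequence b₀ = f, b₁, …, b_s is a regular sequence in B (i.e. the ideal (b₀, …, b_s) is proper and for each i = 1, …, s the image of b_i is not a zero divisor in B/(b₀, …, b_{i−1})). -/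
/-- The ideal `J'` of the polynomial ring `B[y₁, …, y_s]` generated by the elements
`L_i = f·y_i − c_i`. -/
noncomputable def davisIdeal (B : Type*) [CommRing B] (s : ℕ) (f : B) (c : Fin s → B) :
    Ideal (MvPolynomial (Fin s) B) :=
  Ideal.span (Set.range fun i : Fin s =>
    MvPolynomial.C f * MvPolynomial.X i - MvPolynomial.C (c i))

/-- The `B`-algebra homomorphism `β : B[y₁, …, y_s] → K`, `y_i ↦ c_i/f`, whose image is
the affine modification `B[(f, c₁, …, c_s)/f] = B[c₁/f, …, c_s/f] ⊆ K`. -/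
noncomputable def davisHom (B K : Type*) [CommRing B] [Field K] [Algebra B K] (s : ℕ)
    (f : B) (c : Fin s → B) : MvPolynomial (Fin s) B →ₐ[B] K :=
  MvPolynomial.aeval fun i => algebraMap B K (c i) / algebraMap B K f

open Finset in
lemma antisym_sum_zero {R : Type*} [CommRing R] {n : ℕ} (a m : Fin n → Fin n → R)
    (ha : ∀ i j, a i j = - a j i) (h0 : ∀ i, a i i = 0) (hm : ∀ i j, m i j = m j i) :
    ∑ i, ∑ j, a i j * m i j = 0 := by
  rw [← Finset.sum_product']
  exact Finset.sum_ninvolution (fun p => (p.2, p.1))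
    (fun p => by simp only; rw [ha p.1 p.2, hm p.2 p.1]; ring)
    (fun p hp => by
      intro hpe
      apply hp
      have : p.2 = p.1 := congrArg Prod.fst hpe
      rw [this, h0, zero_mul])
    (fun p => Finset.mem_univ _) (fun p => rfl)


/-- Syzygy lemma: if `c` is a regular sequence modulo `f`, then any relation
`∑ hᵢ cᵢ ∈ (f)` among the `cᵢ` supported in indices `< n` comes from the trivial
(Koszul) relations, plus `f`-multiples. -/
lemma davis_syz {R : Type*} [CommRing R] {s : ℕ} (f : R) (c : Fin s → R)
    (reg : ∀ i : Fin s, ∀ x : R,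
      x * c i ∈ Ideal.span (insert f (c '' {j | (j : ℕ) < (i : ℕ)})) →
      x ∈ Ideal.span (insert f (c '' {j | (j : ℕ) < (i : ℕ)}))) :
    ∀ n : ℕ, n ≤ s → ∀ h : Fin s → R, (∀ i : Fin s, n ≤ (i : ℕ) → h i = 0) →
    (∑ i, h i * c i) ∈ Ideal.span {f} →
    ∃ (a : Fin s → Fin s → R) (d : Fin s → R),
      (∀ i j, a i j = - a j i) ∧ (∀ i, a i i = 0) ∧
      (∀ i j : Fin s, n ≤ (i : ℕ) ∨ n ≤ (j : ℕ) → a i j = 0) ∧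
      (∀ i, h i = (∑ j, a i j * c j) + f * d i) := by
  intro n
  induction n with
  | zero =>
    intro _ h hsupp _
    refine ⟨0, 0, by simp, by simp, by simp, fun i => ?_⟩
    simp [hsupp i (Nat.zero_le _)]
  | succ n ih =>
    intro hns h hsupp hmem
    have hn : n < s := hns
    set i₀ : Fin s := ⟨n, hn⟩ with hi₀
    set I : Ideal R := Ideal.span (insert f (c '' {j | (j : ℕ) < n})) with hI
    have hI' : I = Ideal.span (insert f (c '' {j | (j : ℕ) < (i₀ : ℕ)})) := rfl
    have hmem0 : h i₀ * c i₀ ∈ I := by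
      have h1 : (∑ i, h i * c i) ∈ I := by
        refine Ideal.span_mono ?_ hmem
        simp
      have h2 : (∑ i ∈ Finset.univ.erase i₀, h i * c i) ∈ I := by
        refine Ideal.sum_mem _ fun i hi => ?_
        rcases lt_or_ge (i : ℕ) n with hlt | hge
        · exact Ideal.mul_mem_left _ _ (Ideal.subset_span (Set.mem_insert_iff.2
            (Or.inr ⟨i, hlt, rfl⟩)))
        · have hne : (i : ℕ) ≠ n := fun hc => (Finset.mem_erase.1 hi).1 (Fin.ext hc)
          have : n + 1 ≤ (i : ℕ) := lt_of_le_of_ne hge (Ne.symm hne)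
          rw [hsupp i this, zero_mul]
          exact Ideal.zero_mem _
      have := Ideal.sub_mem _ h1 h2
      rwa [← Finset.add_sum_erase _ _ (Finset.mem_univ i₀), add_sub_cancel_right] at this
    have hmem1 : h i₀ ∈ I := reg i₀ _ (hI' ▸ hmem0)
    obtain ⟨d', z, hz, hrep⟩ := Ideal.mem_span_insert.1 (hI ▸ hmem1)
    have himg : c '' {j | (j : ℕ) < n}
        = Set.range (fun j : {j : Fin s // (j : ℕ) < n} => c j) := by
      ext x; constructor
      · rintro ⟨j, hj, rfl⟩; exact ⟨⟨j, hj⟩, rfl⟩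
      · rintro ⟨⟨j, hj⟩, rfl⟩; exact ⟨j, hj, rfl⟩
    rw [himg] at hz
    obtain ⟨e', he'⟩ := Ideal.mem_span_range_iff_exists_fun.1 hz
    classical
    set e : Fin s → R := fun j => if hj : (j : ℕ) < n then e' ⟨j, hj⟩ else 0 with he
    have hesupp : ∀ j : Fin s, n ≤ (j : ℕ) → e j = 0 := fun j hj => by
      simp [he, Nat.not_lt.2 hj]
    have hesum : ∑ j, e j * c j = z := by
      have h1 : ∑ j : Fin s, e j * c j
          = ∑ j ∈ Finset.univ.filter (fun j : Fin s => (j : ℕ) < n), e j * c j := by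
        symm
        apply Finset.sum_subset (Finset.filter_subset _ _)
        intro j _ hj
        simp only [Finset.mem_filter, Finset.mem_univ, true_and] at hj
        rw [hesupp j (Nat.le_of_not_lt hj), zero_mul]
      have h2 : ∑ j ∈ Finset.univ.filter (fun j : Fin s => (j : ℕ) < n), e j * c j
          = ∑ j : {j : Fin s // (j : ℕ) < n}, e' j * c (j : Fin s) := by
        rw [Finset.sum_subtype (p := fun j : Fin s => (j : ℕ) < n)
          (Finset.univ.filter (fun j : Fin s => (j : ℕ) < n)) (by simp) (fun j => e j * c j)]
        exact Finset.sum_congr rfl fun j _ => by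
          obtain ⟨j, hj⟩ := j; simp [he, hj]
      rw [h1, h2, he']
    -- the adjusted relation
    set h' : Fin s → R := fun i => if (i : ℕ) < n then h i + e i * c i₀ else 0 with hh'
    have hsupp' : ∀ i : Fin s, n ≤ (i : ℕ) → h' i = 0 := fun i hi => by
      simp [hh', Nat.not_lt.2 hi]
    have hkey : ∀ i : Fin s, i ≠ i₀ → h i = h' i - e i * c i₀ := by
      intro i hi
      rcases lt_trichotomy (i : ℕ) n with hlt | heq | hgt
      · simp [hh', hlt]
      · exact absurd (Fin.ext heq) hi
      · rw [hsupp i hgt, hsupp' i (le_of_lt hgt), hesupp i (le_of_lt hgt)]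
        ring
    have hmem' : (∑ i, h' i * c i) ∈ Ideal.span {f} := by
      have hsum : ∑ i, h' i * c i
          = ∑ i, (h i * c i - (if i = i₀ then h i₀ * c i₀ else 0) + (e i * c i) * c i₀) := by
        refine Finset.sum_congr rfl fun i _ => ?_
        rcases lt_trichotomy (i : ℕ) n with hlt | heq | hgt
        · have : i ≠ i₀ := fun hc => by rw [hc] at hlt; exact lt_irrefl n hlt
          simp only [hh', if_pos hlt, if_neg this]
          ring
        · have hii : i = i₀ := Fin.ext heq
          rw [hsupp' i (le_of_eq heq.symm), if_pos hii,
            hesupp i (le_of_eq heq.symm), ← hii]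
          ring
        · have : i ≠ i₀ := fun hc => by rw [hc] at hgt; exact lt_irrefl n hgt
          simp only [hh', if_neg (Nat.not_lt.2 (le_of_lt hgt)), if_neg this,
            hsupp i hgt, hesupp i (le_of_lt hgt)]
          ring
      rw [hsum, Finset.sum_add_distrib, Finset.sum_sub_distrib, Finset.sum_ite_eq'
        Finset.univ i₀ (fun _ => h i₀ * c i₀)]
      simp only [Finset.mem_univ, if_pos, ← Finset.sum_mul, hesum]
      rw [hrep]
      have : (∑ i, h i * c i) - (d' * f + z) * c i₀ + z * c i₀
          = (∑ i, h i * c i) + (- (d' * c i₀)) * f := by ring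
      rw [this]
      exact Ideal.add_mem _ hmem (Ideal.mul_mem_left _ _ (Ideal.subset_span rfl))
    obtain ⟨a', d'', ha'1, ha'2, ha'3, ha'4⟩ := ih (le_of_lt hn) h' hsupp' hmem'
    refine ⟨fun i j => if (i : ℕ) = n then e j else if (j : ℕ) = n then -(e i) else a' i j,
      fun i => if (i : ℕ) = n then d' else d'' i, fun i j => ?_, fun i => ?_,
      fun i j hij => ?_, fun i => ?_⟩
    · show (if (i : ℕ) = n then e j else if (j : ℕ) = n then -(e i) else a' i j)
        = - (if (j : ℕ) = n then e i else if (i : ℕ) = n then -(e j) else a' j i)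
      by_cases hi : (i : ℕ) = n <;> by_cases hj : (j : ℕ) = n
      · rw [if_pos hi, if_pos hj, hesupp j (le_of_eq hj.symm),
          hesupp i (le_of_eq hi.symm), neg_zero]
      · rw [if_pos hi, if_neg hj, if_pos hi, neg_neg]
      · rw [if_neg hi, if_pos hj, if_pos hj]
      · rw [if_neg hi, if_neg hj, if_neg hj, if_neg hi, ha'1 i j]
    · show (if (i : ℕ) = n then e i else if (i : ℕ) = n then -(e i) else a' i i) = 0
      by_cases hi : (i : ℕ) = n
      · rw [if_pos hi]; exact hesupp i (le_of_eq hi.symm)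
      · rw [if_neg hi, if_neg hi]; exact ha'2 i
    · show (if (i : ℕ) = n then e j else if (j : ℕ) = n then -(e i) else a' i j) = 0
      rcases hij with hij | hij
      · have hi : (i : ℕ) ≠ n := by omega
        rw [if_neg hi]
        by_cases hj : (j : ℕ) = n
        · rw [if_pos hj, hesupp i (by omega), neg_zero]
        · rw [if_neg hj]; exact ha'3 i j (Or.inl (by omega))
      · by_cases hi : (i : ℕ) = n
        · rw [if_pos hi]; exact hesupp j (by omega)
        · rw [if_neg hi]
          by_cases hj : (j : ℕ) = n
          · rw [if_pos hj, hesupp i (by omega), neg_zero]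
          · rw [if_neg hj]; exact ha'3 i j (Or.inr (by omega))
    · show h i = (∑ j, (if (i : ℕ) = n then e j else
          if (j : ℕ) = n then -(e i) else a' i j) * c j)
        + f * (if (i : ℕ) = n then d' else d'' i)
      by_cases hi : (i : ℕ) = n
      · have hii : i = i₀ := Fin.ext hi
        simp only [if_pos hi]
        rw [hii, hrep, hesum.symm]
        ring
      · have hii : i ≠ i₀ := fun hc => hi (by rw [hc])
        simp only [if_neg hi]
        have hterm : ∀ j : Fin s, (if (j : ℕ) = n then -(e i) else a' i j) * c j
            = a' i j * c j - (if j = i₀ then e i * c i₀ + a' i i₀ * c i₀ else 0) := by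
          intro j
          by_cases hj : (j : ℕ) = n
          · have hji : j = i₀ := Fin.ext hj
            rw [if_pos hj, if_pos hji, hji, ha'3 i i₀ (Or.inr (le_refl n))]
            ring
          · rw [if_neg hj, if_neg (fun hc => hj (by rw [hc]))]
            ring
        have hsplit : (∑ j : Fin s, (if (j : ℕ) = n then -(e i) else a' i j) * c j)
            = (∑ j : Fin s, a' i j * c j) - e i * c i₀ := by
          rw [Finset.sum_congr rfl (fun j _ => hterm j), Finset.sum_sub_distrib,
            Finset.sum_ite_eq' Finset.univ i₀
              (fun _ => e i * c i₀ + a' i i₀ * c i₀),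
            ha'3 i i₀ (Or.inr (le_refl n))]
          simp only [Finset.mem_univ, if_pos]
          ring
        rw [hsplit, hkey i hii, ha'4 i]
        ring

open MvPolynomial in
lemma davis_colon {B : Type*} [CommRing B] [IsDomain B] {s : ℕ} {f : B} (hf : f ≠ 0)
    (c : Fin s → B)
    (reg : ∀ i : Fin s, ∀ x : B,
      x * c i ∈ Ideal.span (insert f (c '' {j | (j : ℕ) < (i : ℕ)})) →
      x ∈ Ideal.span (insert f (c '' {j | (j : ℕ) < (i : ℕ)})))
    (g : MvPolynomial (Fin s) B) (hg : C f * g ∈ davisIdeal B s f c) :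
    g ∈ davisIdeal B s f c := by
  classical
  -- transfer regularity to the polynomial ring
  have regP : ∀ i : Fin s, ∀ p : MvPolynomial (Fin s) B,
      p * C (c i) ∈ Ideal.span (insert (C f)
        ((fun j => (C (c j) : MvPolynomial (Fin s) B)) '' {j | (j : ℕ) < (i : ℕ)})) →
      p ∈ Ideal.span (insert (C f)
        ((fun j => (C (c j) : MvPolynomial (Fin s) B)) '' {j | (j : ℕ) < (i : ℕ)})) := by
    intro i p hp
    have hset : (insert (C f)
          ((fun j => (C (c j) : MvPolynomial (Fin s) B)) '' {j | (j : ℕ) < (i : ℕ)})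
          : Set (MvPolynomial (Fin s) B))
        = (fun x => (C x : MvPolynomial (Fin s) B)) ''
            (insert f (c '' {j | (j : ℕ) < (i : ℕ)})) := by
      rw [Set.image_insert_eq, Set.image_image]
    rw [hset, ← Ideal.map_span (C : B →+* MvPolynomial (Fin s) B)] at hp ⊢
    rw [MvPolynomial.mem_map_C_iff] at hp ⊢
    intro m
    have h1 := hp m
    rw [mul_comm, MvPolynomial.coeff_C_mul] at h1
    exact reg i _ (by rwa [mul_comm] at h1)
  obtain ⟨h, hrep⟩ := Ideal.mem_span_range_iff_exists_fun.1 hg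
  have hsum : (∑ i, h i * C (c i)) ∈ Ideal.span {(C f : MvPolynomial (Fin s) B)} := by
    rw [Ideal.mem_span_singleton]
    refine ⟨(∑ i, h i * X i) - g, ?_⟩
    rw [mul_sub, Finset.mul_sum, ← hrep, ← Finset.sum_sub_distrib]
    exact Finset.sum_congr rfl fun i _ => by ring
  obtain ⟨a, d, ha1, ha2, _, ha4⟩ := davis_syz (C f) (fun i => (C (c i) : MvPolynomial (Fin s) B))
    regP s le_rfl h (fun i hi => absurd hi (Nat.not_le.2 i.isLt)) hsum
  have E1 : ∑ i, ∑ j, a i j * ((C (c j) : MvPolynomial (Fin s) B) * C (c i)) = 0 :=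
    antisym_sum_zero a _ ha1 ha2 (fun i j => mul_comm _ _)
  have E2 : ∑ i, ∑ j, a i j * ((X i : MvPolynomial (Fin s) B) * X j) = 0 :=
    antisym_sum_zero a _ ha1 ha2 (fun i j => mul_comm _ _)
  have key : C f * g = C f * ((∑ i, d i * (C f * X i - C (c i)))
      - ∑ i, ∑ j, a i j * (X i * (C f * X j - C (c j)))) := by
    rw [← hrep]
    calc ∑ i, h i * (C f * X i - C (c i))
        = ∑ i, ((∑ j, a i j * C (c j)) + C f * d i) * (C f * X i - C (c i)) :=
          Finset.sum_congr rfl fun i _ => by rw [← ha4 i]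
      _ = (∑ i, ∑ j, (a i j * C (c j)) * (C f * X i - C (c i)))
          + C f * ∑ i, d i * (C f * X i - C (c i)) := by
          rw [Finset.mul_sum, ← Finset.sum_add_distrib]
          exact Finset.sum_congr rfl fun i _ => by rw [add_mul, Finset.sum_mul]; ring
      _ = ((C f * C f) * (∑ i, ∑ j, a i j * (X i * X j))
          - C f * (∑ i, ∑ j, a i j * (X i * (C f * X j - C (c j))))
          - (∑ i, ∑ j, a i j * (C (c j) * C (c i))))
          + C f * ∑ i, d i * (C f * X i - C (c i)) := by
          have hinner : ∀ i : Fin s, ∑ j, (a i j * C (c j)) * (C f * X i - C (c i))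
              = (C f * C f) * (∑ j, a i j * (X i * X j))
                - C f * (∑ j, a i j * (X i * (C f * X j - C (c j))))
                - ∑ j, a i j * (C (c j) * C (c i)) := fun i => by
            rw [Finset.mul_sum, Finset.mul_sum, ← Finset.sum_sub_distrib,
              ← Finset.sum_sub_distrib]
            exact Finset.sum_congr rfl fun j _ => by ring
          rw [Finset.sum_congr rfl fun i _ => hinner i, Finset.sum_sub_distrib,
            Finset.sum_sub_distrib, ← Finset.mul_sum, ← Finset.mul_sum]
      _ = C f * ((∑ i, d i * (C f * X i - C (c i)))
          - ∑ i, ∑ j, a i j * (X i * (C f * X j - C (c j)))) := by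
          rw [E1, E2]; ring
  have hC : (C f : MvPolynomial (Fin s) B) ≠ 0 :=
    fun hc => hf (MvPolynomial.C_injective (Fin s) B (by rw [hc, map_zero]))
  have hgeq := mul_left_cancel₀ hC key
  rw [hgeq]
  refine Ideal.sub_mem _ ?_ ?_
  · exact Ideal.sum_mem _ fun i _ => Ideal.mul_mem_left _ _ (Ideal.subset_span ⟨i, rfl⟩)
  · exact Ideal.sum_mem _ fun i _ => Ideal.sum_mem _ fun j _ =>
      Ideal.mul_mem_left _ _ (Ideal.mul_mem_left _ _ (Ideal.subset_span ⟨j, rfl⟩))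

open MvPolynomial in
lemma davis_pow {B : Type*} [CommRing B] {s : ℕ} (f : B) (c : Fin s → B)
    (g : MvPolynomial (Fin s) B) :
    ∃ (n : ℕ) (r : B), (C f)^n * g - C r ∈ davisIdeal B s f c := by
  induction g using MvPolynomial.induction_on with
  | C a => exact ⟨0, a, by simp⟩
  | add p q hp hq =>
    obtain ⟨n1, r1, h1⟩ := hp
    obtain ⟨n2, r2, h2⟩ := hq
    refine ⟨n1 + n2, f^n2 * r1 + f^n1 * r2, ?_⟩
    have heq : (C f)^(n1+n2) * (p+q) - C (f^n2*r1 + f^n1*r2)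
        = (C f)^n2 * ((C f)^n1 * p - C r1) + (C f)^n1 * ((C f)^n2 * q - C r2) := by
      simp only [map_add, map_mul, map_pow, pow_add]
      ring
    rw [heq]
    exact Ideal.add_mem _ (Ideal.mul_mem_left _ _ h1) (Ideal.mul_mem_left _ _ h2)
  | mul_X p i hp =>
    obtain ⟨n, r, h1⟩ := hp
    refine ⟨n + 1, r * c i, ?_⟩
    have heq : (C f)^(n+1) * (p * X i) - C (r * c i)
        = (C f * X i) * ((C f)^n * p - C r) + C r * (C f * X i - C (c i)) := by
      simp only [map_mul, pow_succ]
      ring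
    rw [heq]
    exact Ideal.add_mem _ (Ideal.mul_mem_left _ _ h1)
      (Ideal.mul_mem_left _ _ (Ideal.subset_span ⟨i, rfl⟩))

open MvPolynomial in
lemma davis_gen_ker {B K : Type*} [CommRing B] [IsDomain B] [Field K] [Algebra B K]
    [IsFractionRing B K] {s : ℕ} {f : B} (hf : f ≠ 0) (c : Fin s → B) (i : Fin s) :
    davisHom B K s f c (C f * X i - C (c i)) = 0 := by
  have hfK : algebraMap B K f ≠ 0 :=
    fun hc => hf (IsFractionRing.injective B K (by rw [hc, map_zero]))
  simp only [davisHom, map_sub, map_mul, aeval_C, aeval_X]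
  field_simp
  simp

open MvPolynomial in
lemma davis_ker_le {B K : Type*} [CommRing B] [IsDomain B] [Field K] [Algebra B K]
    [IsFractionRing B K] {s : ℕ} {f : B} (hf : f ≠ 0) (c : Fin s → B)
    (habs : ∀ g : MvPolynomial (Fin s) B, C f * g ∈ davisIdeal B s f c →
      g ∈ davisIdeal B s f c) :
    RingHom.ker (davisHom B K s f c) ≤ davisIdeal B s f c := by
  have hle : davisIdeal B s f c ≤ RingHom.ker (davisHom B K s f c) := by
    rw [davisIdeal, Ideal.span_le]
    rintro x ⟨i, rfl⟩
    exact davis_gen_ker hf c i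
  intro g hg
  obtain ⟨n, r, hnr⟩ := davis_pow f c g
  have hβ : davisHom B K s f c ((C f)^n * g - C r) = 0 := hle hnr
  rw [map_sub, map_mul, RingHom.mem_ker.1 hg, mul_zero, zero_sub, neg_eq_zero] at hβ
  have hr : r = 0 := by
    apply IsFractionRing.injective B K
    rw [map_zero, ← hβ]
    simp [davisHom]
  rw [hr, map_zero, sub_zero] at hnr
  clear hβ hg hr
  induction n with
  | zero => simpa using hnr
  | succ n ih =>
    rw [pow_succ, mul_comm ((C f)^n) (C f), mul_assoc] at hnr
    exact ih (habs _ hnr)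

/-- **Davis' theorem (Theorem 2.2)**: let `B` be a Noetherian domain with fraction field
`K` and let `b₀ = f, b₁, …, b_s` generate an ideal `J` of `B`, `f ≠ 0`.  Let
`β : B[y₁, …, y_s] → K` send `y_i` to `b_i/f` and let `J'` be the ideal generated by the
`L_i = f·y_i − b_i ∈ ker β`.  Then `ker β = J'` iff `J'` is prime; and `J'` is prime
whenever `b₀ = f, b₁, …, b_s` is a regular sequence (the ideal `(b₀, …, b_s)` is proper
and each `b_i` is a nonzerodivisor mod `(b₀, …, b_{i−1})`). -/
theorem stmt10 (B K : Type*) [CommRing B] [IsDomain B] [IsNoetherianRing B]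
    [Field K] [Algebra B K] [IsFractionRing B K]
    (s : ℕ) (b : Fin (s + 1) → B) (f : B) (hb0 : b 0 = f) (hf : f ≠ 0)
    (J : Ideal B) (hJ : J = Ideal.span (Set.range b)) :
    ((∀ i : Fin s, davisHom B K s f (fun j => b j.succ)
        (MvPolynomial.C f * MvPolynomial.X i - MvPolynomial.C (b i.succ)) = 0) ∧
     (RingHom.ker (davisHom B K s f fun i => b i.succ) =
        davisIdeal B s f (fun i => b i.succ) ↔
      (davisIdeal B s f fun i => b i.succ).IsPrime)) ∧
    ((Ideal.span (Set.range b) ≠ ⊤ ∧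
        ∀ i : Fin s,
          Ideal.Quotient.mk (Ideal.span (b '' {j : Fin (s + 1) | (j : ℕ) ≤ (i : ℕ)}))
              (b i.succ) ∈
            nonZeroDivisors (B ⧸ Ideal.span (b '' {j : Fin (s + 1) | (j : ℕ) ≤ (i : ℕ)}))) →
      (davisIdeal B s f fun i => b i.succ).IsPrime) := by
  classical
  have hfK : algebraMap B K f ≠ 0 :=
    fun hc => hf (IsFractionRing.injective B K (by rw [hc, map_zero]))
  have hle : davisIdeal B s f (fun i => b i.succ)
      ≤ RingHom.ker (davisHom B K s f fun i => b i.succ) := by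
    rw [davisIdeal, Ideal.span_le]
    rintro x ⟨i, rfl⟩
    exact davis_gen_ker hf _ i
  have hCf : (MvPolynomial.C f : MvPolynomial (Fin s) B)
      ∉ davisIdeal B s f (fun i => b i.succ) := by
    intro hc
    have h1 := hle hc
    rw [RingHom.mem_ker] at h1
    apply hfK
    simpa [davisHom] using h1
  refine ⟨⟨fun i => davis_gen_ker hf _ i, ?_, ?_⟩, ?_⟩
  · intro hker
    rw [← hker]
    exact RingHom.ker_isPrime _
  · intro hp
    refine le_antisymm ?_ hle
    apply davis_ker_le hf
    intro g hg
    exact (hp.mem_or_mem hg).resolve_left hCf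
  · rintro ⟨-, hreg⟩
    have reg : ∀ i : Fin s, ∀ x : B,
        x * (fun i : Fin s => b i.succ) i ∈ Ideal.span (insert f
          ((fun i : Fin s => b i.succ) '' {j : Fin s | (j : ℕ) < (i : ℕ)})) →
        x ∈ Ideal.span (insert f
          ((fun i : Fin s => b i.succ) '' {j : Fin s | (j : ℕ) < (i : ℕ)})) := by
      intro i x hx
      have hset : insert f ((fun i : Fin s => b i.succ) '' {j | (j : ℕ) < (i : ℕ)})
          = b '' {j : Fin (s + 1) | (j : ℕ) ≤ (i : ℕ)} := by
        ext y
        simp only [Set.mem_insert_iff, Set.mem_image, Set.mem_setOf_eq]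
        constructor
        · rintro (rfl | ⟨k, hk, rfl⟩)
          · exact ⟨0, Nat.zero_le _, hb0⟩
          · exact ⟨k.succ, by simpa [Fin.val_succ] using hk, rfl⟩
        · rintro ⟨j, hj, rfl⟩
          rcases Fin.eq_zero_or_eq_succ j with rfl | ⟨k, rfl⟩
          · exact Or.inl hb0
          · exact Or.inr ⟨k, by simpa [Fin.val_succ] using hj, rfl⟩
      rw [hset] at hx ⊢
      have h2 := hreg i
      rw [mem_nonZeroDivisors_iff] at h2
      have h3 := h2.2 (Ideal.Quotient.mk _ x) (by
        rw [← map_mul, Ideal.Quotient.eq_zero_iff_mem]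
        exact hx)
      rwa [Ideal.Quotient.eq_zero_iff_mem] at h3
    have hker := davis_ker_le (K := K) hf (fun i => b i.succ)
      (fun g hg => davis_colon hf _ reg g hg)
    have heq : RingHom.ker (davisHom B K s f fun i => b i.succ)
        = davisIdeal B s f fun i => b i.succ := le_antisymm hker hle
    rw [← heq]
    exact RingHom.ker_isPrime _
end

section
/- Let A be a Noetherian integral domain with fraction field K, let I be an ideal of A generated by b₀ = f, b₁, …, b_s with f ≠ 0, let β : A[y₁, …, y_s] → K be the A-algebra homomorphism sending y_i to b_i/f (with image A' = A[I/f]), and let J' be the ideal of A[y₁, …, y_s] generated by the elements f·y_i − b_i, i = 1, …, s. Suppose that for every maximal ideal M of A, with S = A \ M, the localized modification is Davis with representative system b₀, …, b_s: the ideal generated by the elements f·y_i − b_i in (A_M)[y₁, …, y_s] is prime and equals the kernel of the induced map (A_M)[y₁, …, y_s] → K. Then A ↪ A' is a Davis modification: ker β = J' (and J' is prime). -/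
/-- The localization of `A` at the multiplicative set `A \ M`, realized inside the
fraction field `K` as the `A`-subalgebra generated by the inverses `1/s`, `s ∉ M`;
for a maximal ideal `M` this is the local ring `A_M` viewed inside `K`. -/
def locAway (A K : Type*) [CommRing A] [Field K] [Algebra A K] (T : Set A) :
    Subalgebra A K :=
  Algebra.adjoin A ((fun t => (algebraMap A K t)⁻¹) '' T)

open MvPolynomial

theorem Submodule.mem_of_forall_isMaximal_exists_smul_mem {R M : Type*} [CommSemiring R]
    [AddCommMonoid M] [Module R M] (N : Submodule R M) {m : M}
    (h : ∀ P : Ideal R, P.IsMaximal → ∃ t ∉ P, t • m ∈ N) : m ∈ N := by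
  let I : Ideal R := N.comap (LinearMap.toSpanSingleton R M m)
  suffices I = ⊤ by simpa [I] using I.eq_top_iff_one.mp this
  refine Not.imp_symm I.exists_le_maximal fun ⟨P, hP, hle⟩ ↦ ?_
  obtain ⟨t, htP, ht⟩ := h P hP
  exact htP (hle ht)

section davis

variable {A B K : Type*} [CommRing A] [CommRing B] [Field K] [Algebra B K] {s : ℕ}

theorem davisIdeal_le_ker_davisHom {f : B} (c : Fin s → B) (hf : algebraMap B K f ≠ 0) :
    davisIdeal B s f c ≤ RingHom.ker (davisHom B K s f c) := by
  rw [davisIdeal, Ideal.span_le]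
  rintro _ ⟨i, rfl⟩
  simp [davisHom, mul_div_cancel₀ _ hf]

variable [Algebra A B]

theorem map_davisIdeal (f : A) (c : Fin s → A) :
    (davisIdeal A s f c).map (map (algebraMap A B)) =
      davisIdeal B s (algebraMap A B f) (algebraMap A B ∘ c) := by
  simp [davisIdeal, Ideal.map_span, ← Set.range_comp, Function.comp_def]

theorem davisHom_map_algebraMap [Algebra A K] [IsScalarTower A B K] (f : A) (c : Fin s → A)
    (p : MvPolynomial (Fin s) A) :
    davisHom B K s (algebraMap A B f) (algebraMap A B ∘ c) (map (algebraMap A B) p) =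
      davisHom A K s f c p := by
  simp [davisHom, aeval_map_algebraMap, IsScalarTower.algebraMap_apply A B K]

end davis

section locAway

variable {A K : Type*} [CommRing A] [Field K] [Algebra A K] (T : Submonoid A)

theorem exists_mul_eq_algebraMap_of_mem_locAway {x : K} (hx : x ∈ locAway A K T) :
    ∃ t ∈ T, ∃ a : A, algebraMap A K t * x = algebraMap A K a := by
  induction hx using Algebra.adjoin_induction with
  | mem x hx =>
    obtain ⟨t, ht, rfl⟩ := hx
    by_cases h0 : algebraMap A K t = 0
    · exact ⟨t, ht, 0, by simp [h0]⟩
    · exact ⟨t, ht, 1, by simp [h0]⟩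
  | algebraMap a => exact ⟨1, T.one_mem, a, by simp⟩
  | add x y _ _ ihx ihy =>
    obtain ⟨t, ht, a, hx⟩ := ihx
    obtain ⟨t', ht', a', hy⟩ := ihy
    refine ⟨t * t', T.mul_mem ht ht', a * t' + t * a', ?_⟩
    simp only [map_mul, map_add]
    linear_combination algebraMap A K t' * hx + algebraMap A K t * hy
  | mul x y _ _ ihx ihy =>
    obtain ⟨t, ht, a, hx⟩ := ihx
    obtain ⟨t', ht', a', hy⟩ := ihy
    refine ⟨t * t', T.mul_mem ht ht', a * a', ?_⟩
    simp only [map_mul]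
    linear_combination algebraMap A K t' * y * hx + algebraMap A K a * hy


variable {σ : Type*}

theorem exists_C_mul_map_eq_map_of_locAway (g : MvPolynomial σ (locAway A K T)) :
    ∃ t ∈ T, ∃ p : MvPolynomial σ A,
      C (algebraMap A K t) * map (algebraMap (locAway A K T) K) g = map (algebraMap A K) p := by
  induction g using MvPolynomial.induction_on with
  | C x =>
    obtain ⟨t, ht, a, hx⟩ := exists_mul_eq_algebraMap_of_mem_locAway T x.2
    exact ⟨t, ht, C a, by rw [map_C, map_C, ← C_mul]; exact congrArg C hx⟩
  | add g g' ih ih' =>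
    obtain ⟨t, ht, p, hp⟩ := ih
    obtain ⟨t', ht', p', hp'⟩ := ih'
    refine ⟨t * t', T.mul_mem ht ht', C t' * p + C t * p', ?_⟩
    simp only [map_add, map_mul, map_C]
    linear_combination C (algebraMap A K t') * hp + C (algebraMap A K t) * hp'
  | mul_X g i ih =>
    obtain ⟨t, ht, p, hp⟩ := ih
    exact ⟨t, ht, p * X i, by simpa [← mul_assoc] using congrArg (· * X i) hp⟩

theorem exists_C_mul_map_eq_map_of_mem_map (J : Ideal (MvPolynomial σ A))
    {x : MvPolynomial σ (locAway A K T)} (hx : x ∈ J.map (map (algebraMap A (locAway A K T)))) :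
    ∃ t ∈ T, ∃ q ∈ J,
      C (algebraMap A K t) * map (algebraMap (locAway A K T) K) x = map (algebraMap A K) q := by
  induction hx using Submodule.span_induction with
  | mem x hx =>
    obtain ⟨q, hq, rfl⟩ := hx
    refine ⟨1, T.one_mem, q, hq, ?_⟩
    rw [map_one, C_1, one_mul, map_map, ← IsScalarTower.algebraMap_eq]
  | zero => exact ⟨1, T.one_mem, 0, J.zero_mem, by simp⟩
  | add x y _ _ ihx ihy =>
    obtain ⟨t, ht, q, hq, hx⟩ := ihx
    obtain ⟨t', ht', q', hq', hy⟩ := ihy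
    refine ⟨t * t', T.mul_mem ht ht', C t' * q + C t * q',
      J.add_mem (J.mul_mem_left _ hq) (J.mul_mem_left _ hq'), ?_⟩
    simp only [map_add, map_mul, map_C]
    linear_combination C (algebraMap A K t') * hx + C (algebraMap A K t) * hy
  | smul g x _ ihx =>
    obtain ⟨t, ht, q, hq, hx⟩ := ihx
    obtain ⟨t', ht', p, hp⟩ := exists_C_mul_map_eq_map_of_locAway T g
    refine ⟨t' * t, T.mul_mem ht' ht, p * q, J.mul_mem_left _ hq, ?_⟩
    simp only [smul_eq_mul, map_mul]
    linear_combination map (algebraMap (locAway A K T) K) x * C (algebraMap A K t) * hp +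
      map (algebraMap A K) p * hx

theorem exists_smul_mem_of_map_mem_map (hinj : Function.Injective (algebraMap A K))
    (J : Ideal (MvPolynomial σ A)) {p : MvPolynomial σ A}
    (hp : map (algebraMap A (locAway A K T)) p ∈ J.map (map (algebraMap A (locAway A K T)))) :
    ∃ t ∈ T, t • p ∈ J := by
  obtain ⟨t, ht, q, hq, hpq⟩ := exists_C_mul_map_eq_map_of_mem_map T J hp
  rw [map_map, ← IsScalarTower.algebraMap_eq, ← map_C, ← map_mul] at hpq
  exact ⟨t, ht, by rwa [smul_eq_C_mul, map_injective _ hinj hpq]⟩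

end locAway

theorem stmt11_general (A K : Type*) [CommRing A]
    [Field K] [Algebra A K] [IsFractionRing A K]
    (s : ℕ) (b : Fin (s + 1) → A) (f : A) (hf : f ≠ 0)
    (h : ∀ M : Ideal A, M.IsMaximal →
      (davisIdeal (↥(locAway A K {x : A | x ∉ M})) s
          ⟨algebraMap A K f, Subalgebra.algebraMap_mem _ f⟩
          (fun i => ⟨algebraMap A K (b i.succ), Subalgebra.algebraMap_mem _ _⟩)).IsPrime ∧
      RingHom.ker (davisHom (↥(locAway A K {x : A | x ∉ M})) K s
          ⟨algebraMap A K f, Subalgebra.algebraMap_mem _ f⟩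
          fun i => ⟨algebraMap A K (b i.succ), Subalgebra.algebraMap_mem _ _⟩) =
        davisIdeal (↥(locAway A K {x : A | x ∉ M})) s
          ⟨algebraMap A K f, Subalgebra.algebraMap_mem _ f⟩
          fun i => ⟨algebraMap A K (b i.succ), Subalgebra.algebraMap_mem _ _⟩) :
    RingHom.ker (davisHom A K s f fun i => b i.succ) =
      (davisIdeal A s f fun i => b i.succ) ∧
    (davisIdeal A s f fun i => b i.succ).IsPrime := by
  set c : Fin s → A := fun i => b i.succ
  have hinj := IsFractionRing.injective A K
  have hker : RingHom.ker (davisHom A K s f c) = davisIdeal A s f c := by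
    refine le_antisymm (fun p hp => ?_)
      (davisIdeal_le_ker_davisHom c ((map_ne_zero_iff _ hinj).2 hf))
    refine Submodule.mem_of_forall_isMaximal_exists_smul_mem
      ((davisIdeal A s f c).restrictScalars A) fun M hM => ?_
    let S := locAway A K (M.primeCompl : Set A)
    have hloc : RingHom.ker (davisHom S K s (algebraMap A S f) (algebraMap A S ∘ c)) =
        davisIdeal S s (algebraMap A S f) (algebraMap A S ∘ c) := (h M hM).2
    have hpS : map (algebraMap A S) p ∈ (davisIdeal A s f c).map (map (algebraMap A S)) := by
      rwa [map_davisIdeal, ← hloc, RingHom.mem_ker, davisHom_map_algebraMap]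
    exact exists_smul_mem_of_map_mem_map M.primeCompl hinj _ hpS
  exact ⟨hker, hker ▸ RingHom.ker_isPrime _⟩

/-- **Proposition 2.8**: let `A` be a Noetherian domain with fraction field `K`,
`I = (b₀ = f, b₁, …, b_s)` with `f ≠ 0`, and `A' = A[I/f]`.  If for every maximal ideal
`M` of `A` the localized modification `A_M ↪ S⁻¹A'` is Davis with representative system
`b₀, …, b_s` — that is, the ideal generated by the `f·y_i − b_i` in `(A_M)[y₁, …, y_s]`
is prime and equals the kernel of the induced map `(A_M)[y₁, …, y_s] → K` — then the
modification `A ↪ A'` is Davis: the kernel of `β : A[y₁, …, y_s] → K`, `y_i ↦ b_i/f`,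
equals the ideal `J'` generated by the `f·y_i − b_i` (and `J'` is prime). -/
theorem stmt11 (A K : Type*) [CommRing A] [IsDomain A] [IsNoetherianRing A]
    [Field K] [Algebra A K] [IsFractionRing A K]
    (s : ℕ) (b : Fin (s + 1) → A) (f : A) (hb0 : b 0 = f) (hf : f ≠ 0)
    (I : Ideal A) (hI : I = Ideal.span (Set.range b))
    (h : ∀ M : Ideal A, M.IsMaximal →
      (davisIdeal (↥(locAway A K {x : A | x ∉ M})) s
          ⟨algebraMap A K f, Subalgebra.algebraMap_mem _ f⟩
          (fun i => ⟨algebraMap A K (b i.succ), Subalgebra.algebraMap_mem _ _⟩)).IsPrime ∧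
      RingHom.ker (davisHom (↥(locAway A K {x : A | x ∉ M})) K s
          ⟨algebraMap A K f, Subalgebra.algebraMap_mem _ f⟩
          fun i => ⟨algebraMap A K (b i.succ), Subalgebra.algebraMap_mem _ _⟩) =
        davisIdeal (↥(locAway A K {x : A | x ∉ M})) s
          ⟨algebraMap A K f, Subalgebra.algebraMap_mem _ f⟩
          fun i => ⟨algebraMap A K (b i.succ), Subalgebra.algebraMap_mem _ _⟩) :
    RingHom.ker (davisHom A K s f fun i => b i.succ) =
      (davisIdeal A s f fun i => b i.succ) ∧
    (davisIdeal A s f fun i => b i.succ).IsPrime :=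
  stmt11_general A K s b f hf h
end

section
/- Let A be a finitely generated ℂ-algebra which is a normal (integrally closed in its fraction field K) integral domain, let I be an ideal of A, let g ∈ A be a nonzero non-unit, n ≥ 1, f = gⁿ ∈ I, and let A' = A[I/f] ⊆ K, assumed also to be normal. Suppose the principal ideal gA of A is prime (the divisor D of the modification is irreducible and its defining ideal is generated by g) and the radical of the principal ideal gA' of A' is prime (the exceptional divisor E is irreducible). If A' is a unique factorization domain, then A is a unique factorization domain. -/
section AuxA
variable {A : Type*} [CommRing A] [IsDomain A] {g : A}

lemma split_pow_lemma (hg : Prime g) {q : A} :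
    ∀ (n : ℕ) (a b : A), q * g ^ n = a * b →
      ∃ i j a₁ b₁, i + j = n ∧ a = g ^ i * a₁ ∧ b = g ^ j * b₁ ∧ q = a₁ * b₁ := by
  intro n
  induction n with
  | zero => intro a b h; exact ⟨0, 0, a, b, rfl, by ring, by ring, by simpa using h⟩
  | succ n ih =>
    intro a b h
    have hdvd : g ∣ a * b := ⟨q * g ^ n, by linear_combination -h⟩
    rcases hg.2.2 _ _ hdvd with ⟨a', rfl⟩ | ⟨b', rfl⟩
    · have h' : q * g ^ n = a' * b := by
        apply mul_left_cancel₀ hg.1; linear_combination h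
      obtain ⟨i, j, a₁, b₁, hij, ha, hb, hq⟩ := ih a' b h'
      exact ⟨i + 1, j, a₁, b₁, by omega, by rw [ha]; ring, hb, hq⟩
    · have h' : q * g ^ n = a * b' := by
        apply mul_left_cancel₀ hg.1; linear_combination h
      obtain ⟨i, j, a₁, b₁, hij, ha, hb, hq⟩ := ih a b' h'
      exact ⟨i, j + 1, a₁, b₁, by omega, ha, by rw [hb]; ring, hq⟩

lemma no_pow_lemma (hg : Prime g) {q : A} (hq : ¬ IsUnit q) (hgq : ¬ g ∣ q) :
    ∀ (k : ℕ) (c : A), q * c = g ^ k → False := by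
  intro k
  induction k with
  | zero => intro c h; exact hq (IsUnit.of_mul_eq_one _ (by simpa using h))
  | succ k ih =>
    intro c h
    have hdvd : g ∣ q * c := ⟨g ^ k, by rw [h]; ring⟩
    rcases hg.2.2 _ _ hdvd with hqa | ⟨c', rfl⟩
    · exact hgq hqa
    · exact ih c' (mul_left_cancel₀ hg.1 (by linear_combination h))

lemma dvd_of_dvd_mul_pow (hg : Prime g) {q : A} (hgq : ¬ g ∣ q) :
    ∀ (k : ℕ) (a d : A), a * g ^ k = q * d → q ∣ a := by
  intro k
  induction k with
  | zero => intro a d h; exact ⟨d, by simpa using h⟩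
  | succ k ih =>
    intro a d h
    have hdvd : g ∣ q * d := ⟨a * g ^ k, by linear_combination -h⟩
    rcases hg.2.2 _ _ hdvd with hqa | ⟨d', rfl⟩
    · exact absurd hqa hgq
    · exact ih a d' (mul_left_cancel₀ hg.1 (by linear_combination h))

lemma multiset_primes_assoc {B : Type*} [CommMonoidWithZero B] [IsCancelMulZero B] (s : Multiset B)
    (hs : ∀ b ∈ s, IsUnit b ∨ Prime b) :
    ∃ t : Multiset B, (∀ b ∈ t, Prime b) ∧ Associated t.prod s.prod := by
  induction s using Multiset.induction with
  | empty => exact ⟨0, by simp, Associated.refl _⟩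
  | cons a s ih =>
    obtain ⟨t, ht, hassoc⟩ := ih (fun b hb => hs b (Multiset.mem_cons_of_mem hb))
    rcases hs a (Multiset.mem_cons_self a s) with hu | hp
    · refine ⟨t, ht, ?_⟩
      rw [Multiset.prod_cons]
      exact hassoc.trans ((associated_isUnit_mul_left_iff hu).mpr (Associated.refl _)).symm
    · refine ⟨a ::ₘ t, ?_, ?_⟩
      · intro b hb
        rcases Multiset.mem_cons.mp hb with rfl | hb
        · exact hp
        · exact ht b hb
      · rw [Multiset.prod_cons, Multiset.prod_cons]
        exact hassoc.mul_left a
end AuxA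

/-- The subalgebra `A[1/g]` of `K`. -/
def locSub (A K : Type*) [CommRing A] [Field K] [Algebra A K] (g : A) : Subalgebra A K where
  carrier := {x | ∃ (k : ℕ) (a : A), x * (algebraMap A K g) ^ k = algebraMap A K a}
  mul_mem' := by
    rintro x y ⟨k, a, ha⟩ ⟨l, b, hb⟩
    exact ⟨k + l, a * b, by rw [map_mul, ← ha, ← hb]; ring⟩
  add_mem' := by
    rintro x y ⟨k, a, ha⟩ ⟨l, b, hb⟩
    refine ⟨k + l, a * g ^ l + b * g ^ k, ?_⟩
    rw [map_add, map_mul, map_mul, map_pow, map_pow, ← ha, ← hb]; ring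
  algebraMap_mem' := fun a => ⟨0, a, by simp⟩

/-- **Proposition 2.13(1)**: let `A` be a finitely generated `ℂ`-algebra which is a
normal domain with fraction field `K`, `g` a nonzero non-unit, `f = gⁿ ∈ I` (`n ≥ 1`),
and let the affine modification `A' = A[I/f]` also be normal.  Suppose the divisor `D`
is irreducible with defining ideal generated by `g` (the principal ideal `gA` is prime)
and the exceptional divisor `E` is irreducible (the radical of `gA'` is prime).  If `A'`
is a UFD, then `A` is a UFD. -/
theorem stmt14 (A K : Type*) [CommRing A] [IsDomain A] [Algebra ℂ A]
    [Algebra.FiniteType ℂ A] [IsIntegrallyClosed A]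
    [Field K] [Algebra A K] [IsFractionRing A K]
    (I : Ideal A) (g : A) (hg0 : g ≠ 0) (hgu : ¬ IsUnit g) (n : ℕ) (hn : 1 ≤ n)
    (hfI : g ^ n ∈ I)
    (hnormal' : IsIntegrallyClosed ↥(affineModification A K I (g ^ n)))
    (hD : (Ideal.span {g}).IsPrime)
    (g' : ↥(affineModification A K I (g ^ n))) (hg' : (g' : K) = algebraMap A K g)
    (hE : ((Ideal.span {g'}).radical).IsPrime)
    (hUFD : UniqueFactorizationMonoid ↥(affineModification A K I (g ^ n))) :
    UniqueFactorizationMonoid A := by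
  classical
  haveI := hUFD
  set ι := algebraMap A K with hι
  have hinj : Function.Injective ι := IsFractionRing.injective A K
  have hG0 : ι g ≠ 0 := fun h => hg0 (hinj (by simpa using h))
  set B := locSub A K g with hBdef
  -- membership criterion for B
  have hmemB : ∀ x : K, x ∈ B ↔ ∃ (k : ℕ) (a : A), x * (ι g) ^ k = ι a := fun x => Iff.rfl
  -- A' ≤ B
  have hle : affineModification A K I (g ^ n) ≤ B := by
    rw [affineModification]
    apply Algebra.adjoin_le
    rintro _ ⟨b, hb, rfl⟩
    exact ⟨n, b, by rw [map_pow]; exact div_mul_cancel₀ _ (pow_ne_zero _ hG0)⟩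
  have hGB : ι g ∈ B := ⟨0, g, by simp; rfl⟩
  have hGinvB : (ι g)⁻¹ ∈ B := ⟨1, 1, by simp; exact inv_mul_cancel₀ hG0⟩
  set gB : B := ⟨ι g, hGB⟩ with hgBdef
  have hgBunit : IsUnit gB :=
    IsUnit.of_mul_eq_one ⟨_, hGinvB⟩ (Subtype.ext (mul_inv_cancel₀ hG0))
  have hgprime : Prime g := (Ideal.span_singleton_prime hg0).mp hD
  -- g' is not a unit in A'
  have hg'u : ¬ IsUnit g' := by
    intro h
    have htop : Ideal.span {g'} = ⊤ := Ideal.span_singleton_eq_top.mpr h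
    rw [htop, Ideal.radical_top] at hE
    exact hE.ne_top rfl
  -- the inclusion of A' into B
  set j : affineModification A K I (g ^ n) →ₐ[A] B := Subalgebra.inclusion hle with hjdef
  have hcoej : ∀ z : affineModification A K I (g ^ n), ((j z : B) : K) = (z : K) :=
    fun z => Subalgebra.coe_inclusion hle z
  have hjg' : j g' = gB := Subtype.ext ((hcoej g').trans hg')
  -- B is a UFD
  haveI hBufd : UniqueFactorizationMonoid B := by
    rw [UniqueFactorizationMonoid.iff_exists_prime_factors]
    intro x hx
    obtain ⟨k, a, hxk⟩ := x.2
    have ha0 : a ≠ 0 := by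
      rintro rfl
      apply hx
      apply Subtype.ext
      have h0 : (x : K) * (ι g) ^ k = 0 := by rw [hxk]; simp
      rcases mul_eq_zero.mp h0 with h0 | h0
      · exact h0
      · exact absurd h0 (pow_ne_zero _ hG0)
    set aA : affineModification A K I (g ^ n) := ⟨ι a, (affineModification A K I (g ^ n)).algebraMap_mem a⟩ with haAdef
    have haA0 : aA ≠ 0 := by
      intro h
      exact ha0 (hinj (by simpa [haAdef, Subtype.ext_iff] using h))
    obtain ⟨f, hf, hassoc⟩ := UniqueFactorizationMonoid.exists_prime_factors aA haA0
    -- each prime of A' maps to a unit or a prime of B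
    have hjel : ∀ p : affineModification A K I (g ^ n), Prime p → IsUnit (j p) ∨ Prime (j p) := by
      intro p hp
      by_cases hpg : ∃ m : ℕ, p ∣ g' ^ m
      · left
        obtain ⟨m, hm⟩ := hpg
        have : j p ∣ gB ^ m := by
          obtain ⟨c, hc⟩ := hm
          exact ⟨j c, by rw [← hjg', ← map_pow, hc, map_mul]⟩
        exact isUnit_of_dvd_unit this (hgBunit.pow m)
      · right
        push_neg at hpg
        refine ⟨?_, ?_, ?_⟩
        · intro h
          apply hp.1
          apply Subtype.ext
          have h0 : ((j p : B) : K) = 0 := by rw [h]; rfl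
          rw [hcoej p] at h0
          simpa using h0
        · intro h
          obtain ⟨z, hz⟩ := h.exists_right_inv
          obtain ⟨k', c, hzk⟩ := z.2
          have hc' : ι c ∈ affineModification A K I (g ^ n) := (affineModification A K I (g ^ n)).algebraMap_mem c
          have key : p * (⟨ι c, hc'⟩ : affineModification A K I (g ^ n)) = g' ^ k' := by
            apply Subtype.ext
            push_cast [hg']
            have h1 : ((j p : B) : K) = (p : K) := hcoej p
            have h2 : ((j p * z : B) : K) = (p : K) * (z : K) := by push_cast [h1]; ring
            have h3 : (p : K) * (z : K) = 1 := by rw [← h2, hz]; rfl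
            calc (p : K) * ι c = (p : K) * ((z : K) * (ι g) ^ k') := by rw [hzk]
              _ = ((p : K) * (z : K)) * (ι g) ^ k' := by ring
              _ = (ι g) ^ k' := by rw [h3, one_mul]
          exact hpg k' ⟨_, key.symm⟩
        · rintro x' y' ⟨d, hd⟩
          obtain ⟨k₁, a₁, hx1⟩ := x'.2
          obtain ⟨l₁, b₁, hy1⟩ := y'.2
          obtain ⟨m₁, c₁, hd1⟩ := d.2
          -- in A' : (x' g^(k₁+m₁)) * (y' g^l₁) = p * (c₁ g^(k₁+l₁))
          have hxA' : ι (a₁ * g ^ m₁) ∈ affineModification A K I (g ^ n) := (affineModification A K I (g ^ n)).algebraMap_mem _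
          have hyA : ι b₁ ∈ affineModification A K I (g ^ n) := (affineModification A K I (g ^ n)).algebraMap_mem _
          have hcA : ι c₁ ∈ affineModification A K I (g ^ n) := (affineModification A K I (g ^ n)).algebraMap_mem _
          have hdK : (x' : K) * (y' : K) = (p : K) * (d : K) := by
            have h4 := congrArg (Subtype.val) hd
            push_cast at h4
            rw [hcoej p] at h4
            exact h4
          have key : (⟨ι (a₁ * g ^ m₁), hxA'⟩ : affineModification A K I (g ^ n)) * ⟨ι b₁, hyA⟩
              = p * (⟨ι c₁, hcA⟩ * g' ^ (k₁ + l₁)) := by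
            apply Subtype.ext
            push_cast [hg']
            calc ι (a₁ * g ^ m₁) * ι b₁
                = ((x' : K) * (ι g) ^ (k₁ + m₁)) * ((y' : K) * (ι g) ^ l₁) := by
                  rw [map_mul, map_pow, ← hx1, ← hy1]; ring
              _ = ((x' : K) * (y' : K)) * (ι g) ^ (k₁ + m₁ + l₁) := by ring
              _ = (p : K) * ((d : K) * (ι g) ^ m₁) * (ι g) ^ (k₁ + l₁) := by
                  rw [hdK]; ring
              _ = (p : K) * (ι c₁ * (ι g) ^ (k₁ + l₁)) := by rw [hd1]; ring
          rcases hp.2.2 _ _ ⟨_, key⟩ with hpa | hpb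
          · left
            obtain ⟨e, he⟩ := hpa
            have hxe : x' * gB ^ (k₁ + m₁) = j p * j e := by
              apply Subtype.ext
              have h5 : ((j p * j e : B) : K) = (p : K) * (e : K) := by
                push_cast [hcoej]; ring
              push_cast [h5]
              have h6 := congrArg Subtype.val he
              push_cast at h6
              calc (x' : K) * (ι g) ^ (k₁ + m₁)
                  = ((x' : K) * (ι g) ^ k₁) * (ι g) ^ m₁ := by ring
                _ = ι a₁ * (ι g) ^ m₁ := by rw [hx1]
                _ = ι (a₁ * g ^ m₁) := by rw [map_mul, map_pow]
                _ = (p : K) * (e : K) := h6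
            have : j p ∣ x' * gB ^ (k₁ + m₁) := ⟨j e, hxe⟩
            exact ((hgBunit.pow (k₁ + m₁)).dvd_mul_right).mp this
          · right
            obtain ⟨e, he⟩ := hpb
            have hye : y' * gB ^ l₁ = j p * j e := by
              apply Subtype.ext
              have h5 : ((j p * j e : B) : K) = (p : K) * (e : K) := by
                push_cast [hcoej]; ring
              push_cast [h5]
              have h6 := congrArg Subtype.val he
              push_cast at h6
              calc (y' : K) * (ι g) ^ l₁ = ι b₁ := hy1
                _ = (p : K) * (e : K) := by rw [← h6]
            have : j p ∣ y' * gB ^ l₁ := ⟨j e, hye⟩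
            exact ((hgBunit.pow l₁).dvd_mul_right).mp this
    -- assemble the factorisation of x
    obtain ⟨t, ht, htassoc⟩ := multiset_primes_assoc (f.map j)
      (by
        intro b hb
        obtain ⟨p, hp, rfl⟩ := Multiset.mem_map.mp hb
        exact hjel p (hf p hp))
    refine ⟨t, ht, ?_⟩
    have h1 : Associated (f.map j).prod (j aA) := by
      rw [← map_multiset_prod]
      exact (hassoc.map (j : affineModification A K I (g ^ n) →* B))
    have h2 : Associated x (j aA) := by
      refine ⟨hgBunit.unit ^ k, Subtype.ext ?_⟩
      push_cast [hgBunit.unit_spec]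
      rw [hcoej aA]
      exact hxk
    exact (htassoc.trans h1).trans h2.symm
  -- Nagata: conclude that A is a UFD
  haveI : IsNoetherianRing A := Algebra.FiniteType.isNoetherianRing ℂ A
  haveI wfA : WfDvdMonoid A := inferInstance
  have key : ∀ q : A, Irreducible q → Prime q := by
    intro q hq
    by_cases hgq : g ∣ q
    · obtain ⟨c, rfl⟩ := hgq
      rcases hq.isUnit_or_isUnit rfl with h | h
      · exact absurd h hgu
      · exact (Associated.prime ⟨h.unit, by rw [IsUnit.unit_spec]⟩ hgprime)
    · have hq0 : q ≠ 0 := hq.ne_zero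
      have hqB : ι q ∈ B := ⟨0, q, by simp; rfl⟩
      set qB : B := ⟨ι q, hqB⟩ with hqBdef
      have hqBirr : Irreducible qB := by
        constructor
        · intro h
          obtain ⟨z, hz⟩ := h.exists_right_inv
          obtain ⟨k, c, hzk⟩ := z.2
          have : q * c = g ^ k := by
            apply hinj
            push_cast
            have h3 : (qB : K) * (z : K) = 1 := by
              have := congrArg Subtype.val hz; push_cast at this; exact this
            calc ι (q * c) = ι q * ((z : K) * (ι g) ^ k) := by rw [map_mul, hzk]
              _ = ((qB : K) * (z : K)) * (ι g) ^ k := by rw [hqBdef]; ring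
              _ = (ι g) ^ k := by rw [h3, one_mul]
              _ = ι (g ^ k) := by rw [map_pow]
          exact absurd (no_pow_lemma hgprime hq.not_isUnit hgq k c this) (fun h => h)
        · rintro x y hxy
          obtain ⟨k, a, hxk⟩ := x.2
          obtain ⟨l, b, hyl⟩ := y.2
          have hab : q * g ^ (k + l) = a * b := by
            apply hinj
            have hxyK : ι q = (x : K) * (y : K) := by
              have := congrArg Subtype.val hxy; push_cast at this; exact this
            calc ι (q * g ^ (k + l)) = ι q * (ι g) ^ (k + l) := by rw [map_mul, map_pow]
              _ = ((x : K) * (ι g) ^ k) * ((y : K) * (ι g) ^ l) := by rw [hxyK]; ring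
              _ = ι a * ι b := by rw [hxk, hyl]
              _ = ι (a * b) := by rw [map_mul]
          obtain ⟨i, j', a₁, b₁, hij, ha, hb, hq'⟩ := split_pow_lemma hgprime (k + l) a b hab
          rcases hq.isUnit_or_isUnit hq' with h1 | h1
          · left
            have ha₁B : ι a₁ ∈ B := ⟨0, a₁, by simp; rfl⟩
            have hx' : x * gB ^ k = (⟨ι a₁, ha₁B⟩ : B) * gB ^ i := by
              apply Subtype.ext
              push_cast
              rw [hxk, ha, map_mul, map_pow]; ring
            have hUx : IsUnit (x * gB ^ k) := by
              rw [hx']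
              have heq : (⟨ι a₁, ha₁B⟩ : B) = algebraMap A B a₁ := rfl
              rw [heq]
              exact (h1.map (algebraMap A B)).mul (hgBunit.pow i)
            exact isUnit_of_mul_isUnit_left hUx
          · right
            have hb₁B : ι b₁ ∈ B := ⟨0, b₁, by simp; rfl⟩
            have hy' : y * gB ^ l = (⟨ι b₁, hb₁B⟩ : B) * gB ^ j' := by
              apply Subtype.ext
              push_cast
              rw [hyl, hb, map_mul, map_pow]; ring
            have hUy : IsUnit (y * gB ^ l) := by
              rw [hy']
              have heq : (⟨ι b₁, hb₁B⟩ : B) = algebraMap A B b₁ := rfl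
              rw [heq]
              exact (h1.map (algebraMap A B)).mul (hgBunit.pow j')
            exact isUnit_of_mul_isUnit_left hUy
      have hqBprime : Prime qB :=
        (@UniqueFactorizationMonoid.irreducible_iff_prime B _ hBufd qB).mp hqBirr
      refine ⟨hq0, hq.not_isUnit, fun a b hab => ?_⟩
      obtain ⟨c, hc⟩ := hab
      have haB : ι a ∈ B := ⟨0, a, by simp; rfl⟩
      have hbB : ι b ∈ B := ⟨0, b, by simp; rfl⟩
      have hcB : ι c ∈ B := ⟨0, c, by simp; rfl⟩
      have hdv : qB ∣ (⟨ι a, haB⟩ : B) * ⟨ι b, hbB⟩ := by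
        refine ⟨⟨ι c, hcB⟩, Subtype.ext ?_⟩
        push_cast
        rw [← map_mul, ← map_mul, hc]
      rcases hqBprime.2.2 _ _ hdv with h | h
      · left
        obtain ⟨z, hz⟩ := h
        obtain ⟨k, d, hdk⟩ := z.2
        have : a * g ^ k = q * d := by
          apply hinj
          have hzK : ι a = ι q * (z : K) := by
            have := congrArg Subtype.val hz; push_cast at this; exact this
          calc ι (a * g ^ k) = (ι a) * (ι g) ^ k := by rw [map_mul, map_pow]
            _ = ι q * ((z : K) * (ι g) ^ k) := by rw [hzK]; ring
            _ = ι q * ι d := by rw [hdk]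
            _ = ι (q * d) := by rw [map_mul]
        exact dvd_of_dvd_mul_pow hgprime hgq k a d this
      · right
        obtain ⟨z, hz⟩ := h
        obtain ⟨k, d, hdk⟩ := z.2
        have : b * g ^ k = q * d := by
          apply hinj
          have hzK : ι b = ι q * (z : K) := by
            have := congrArg Subtype.val hz; push_cast at this; exact this
          calc ι (b * g ^ k) = (ι b) * (ι g) ^ k := by rw [map_mul, map_pow]
            _ = ι q * ((z : K) * (ι g) ^ k) := by rw [hzK]; ring
            _ = ι q * ι d := by rw [hdk]
            _ = ι (q * d) := by rw [map_mul]
        exact dvd_of_dvd_mul_pow hgprime hgq k b d this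

  exact { wfA with irreducible_iff_prime := fun {q} => ⟨key q, Prime.irreducible⟩ }
end

section
/- Let A be a finitely generated ℂ-algebra which is a normal integral domain with fraction field K and a unique factorization domain, let I be an ideal of A, let g ∈ A be a nonzero non-unit, n ≥ 1, f = gⁿ ∈ I, and let A' = A[I/f] ⊆ K, assumed normal. Suppose the radical of the principal ideal gA of A is prime (the divisor D of the modification is irreducible) and the principal ideal gA' of A' is prime (the exceptional divisor E is irreducible and its defining ideal in A' is generated by the image g' of g). Then A' is a unique factorization domain. -/
/-- Nagata-style criterion, tailored to our situation: if `M` is a Noetherian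
subalgebra of `K` contained in `A[1/g]`, containing a prime element `g'` lying over
`g`, and `A` is a UFD, then `M` is a UFD. -/
theorem nagata_aux (A K : Type*) [CommRing A] [IsDomain A] [IsNoetherianRing A]
    [UniqueFactorizationMonoid A] [Field K] [Algebra A K]
    (hι : Function.Injective (algebraMap A K))
    (g : A) (hgK : algebraMap A K g ≠ 0)
    (M : Subalgebra A K) [hMnoeth : IsNoetherianRing ↥M]
    (hMg : ∀ x ∈ M, ∃ (m : ℕ) (a : A), x * algebraMap A K g ^ m = algebraMap A K a)
    (g' : ↥M) (hg' : (g' : K) = algebraMap A K g)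
    (hg'prime : Prime g') :
    UniqueFactorizationMonoid ↥M := by
  classical
  set ι := algebraMap A K with hιdef
  have hg'0 : g' ≠ 0 := by
    intro h0
    apply hgK
    rw [← hg', h0, ZeroMemClass.coe_zero]
  haveI : WfDvdMonoid ↥M := IsNoetherianRing.wfDvdMonoid
  -- the ring `B = A[1/g]` inside `K`
  set B : Subalgebra A K := Algebra.adjoin A {(ι g)⁻¹} with hB
  have hhB : (ι g)⁻¹ ∈ B := Algebra.subset_adjoin rfl
  have hginv : ι g * (ι g)⁻¹ = 1 := mul_inv_cancel₀ hgK
  have hMB : M ≤ B := by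
    intro x hx
    obtain ⟨m, a, hma⟩ := hMg x hx
    have hx' : x = ι a * ((ι g)⁻¹) ^ m := by
      have hgm : ι g ^ m ≠ 0 := pow_ne_zero _ hgK
      field_simp
      rw [← hma, one_div, inv_pow, mul_inv_cancel_right₀ hgm]
    rw [hx']
    exact mul_mem (B.algebraMap_mem a) (pow_mem hhB m)
  -- clearing denominators in `B`
  have P1 : ∀ z : K, z ∈ B → ∃ (m : ℕ) (a : A), z * ι g ^ m = ι a := by
    intro z hz
    induction hz using Algebra.adjoin_induction with
    | mem x hx =>
      rcases hx with rfl
      exact ⟨1, 1, by rw [pow_one, inv_mul_cancel₀ hgK, map_one]⟩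
    | algebraMap r => exact ⟨0, r, by rw [pow_zero, mul_one]⟩
    | add x y hx hy ihx ihy =>
      obtain ⟨mx, a, ha⟩ := ihx
      obtain ⟨my, b, hb⟩ := ihy
      refine ⟨mx + my, a * g ^ my + b * g ^ mx, ?_⟩
      rw [map_add, map_mul, map_mul, map_pow, map_pow, ← ha, ← hb]
      ring
    | mul x y hx hy ihx ihy =>
      obtain ⟨mx, a, ha⟩ := ihx
      obtain ⟨my, b, hb⟩ := ihy
      refine ⟨mx + my, a * b, ?_⟩
      rw [map_mul, ← ha, ← hb]
      ring
  -- the image of a prime of `A` not dividing `g` is prime in `B`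
  have coe_aB : ∀ a : A, ((algebraMap A ↥B a : ↥B) : K) = ι a := fun a => rfl
  have aB_ne : ∀ a : A, a ≠ 0 → (algebraMap A ↥B a : ↥B) ≠ 0 := by
    intro a ha h0
    apply ha
    apply hι
    rw [map_zero, ← coe_aB a, h0, ZeroMemClass.coe_zero]
  have primeB : ∀ p : A, Prime p → ¬ p ∣ g → Prime (algebraMap A ↥B p) := by
    intro p hp hpg
    refine ⟨aB_ne p hp.ne_zero, ?_, ?_⟩
    · rintro hu
      obtain ⟨z, hz⟩ := isUnit_iff_exists_inv.mp hu
      obtain ⟨m, b, hb⟩ := P1 (z : K) z.2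
      have heq : ι (g ^ m) = ι (p * b) := by
        have hz' : ι p * (z : K) = 1 := congrArg (fun w : ↥B => (w : K)) hz
        rw [map_pow, map_mul]
        calc ι g ^ m = (ι p * (z : K)) * ι g ^ m := by rw [hz', one_mul]
          _ = ι p * ((z : K) * ι g ^ m) := by ring
          _ = ι p * ι b := by rw [hb]
      have hdvd : p ∣ g ^ m := ⟨b, hι heq⟩
      rcases Nat.eq_zero_or_pos m with rfl | hm
      · rw [pow_zero] at hdvd
        exact hp.not_unit (isUnit_of_dvd_one hdvd)
      · exact hpg (hp.dvd_of_dvd_pow hdvd)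
    · rintro x y ⟨w, hw⟩
      obtain ⟨sx, a₁, ha₁⟩ := P1 (x : K) x.2
      obtain ⟨sy, a₂, ha₂⟩ := P1 (y : K) y.2
      obtain ⟨u, c, hc⟩ := P1 (w : K) w.2
      have hKeq : ι (a₁ * a₂ * g ^ u) = ι (p * c * g ^ (sx + sy)) := by
        have hw' : (x : K) * (y : K) = ι p * (w : K) :=
          congrArg (fun t : ↥B => (t : K)) hw
        simp only [map_mul, map_pow]
        calc ι a₁ * ι a₂ * ι g ^ u
            = ((x : K) * ι g ^ sx) * ((y : K) * ι g ^ sy) * ι g ^ u := by rw [ha₁, ha₂]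
          _ = ((x : K) * (y : K)) * ι g ^ u * (ι g ^ sx * ι g ^ sy) := by ring
          _ = (ι p * (w : K)) * ι g ^ u * (ι g ^ sx * ι g ^ sy) := by rw [hw']
          _ = ι p * ((w : K) * ι g ^ u) * (ι g ^ sx * ι g ^ sy) := by ring
          _ = ι p * ι c * (ι g ^ sx * ι g ^ sy) := by rw [hc]
          _ = ι p * ι c * ι g ^ (sx + sy) := by rw [pow_add]
      have hAeq : a₁ * a₂ * g ^ u = p * c * g ^ (sx + sy) := hι hKeq
      have hpd : p ∣ a₁ * a₂ := by
        have h1 : p ∣ a₁ * a₂ * g ^ u := ⟨c * g ^ (sx + sy), by rw [hAeq]; ring⟩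
        rcases hp.2.2 _ _ h1 with h2 | h2
        · exact h2
        · exact absurd (hp.dvd_of_dvd_pow h2) hpg
      have key : ∀ (v : ↥B) (a d : A) (sv : ℕ), (v : K) * ι g ^ sv = ι a → a = p * d →
          algebraMap A ↥B p ∣ v := by
        intro v a d sv hv had
        refine ⟨⟨ι d * ((ι g)⁻¹) ^ sv, mul_mem (B.algebraMap_mem d) (pow_mem hhB sv)⟩, ?_⟩
        apply Subtype.ext
        show (v : K) = ι p * (ι d * ((ι g)⁻¹) ^ sv)
        have hgm : ι g ^ sv ≠ 0 := pow_ne_zero _ hgK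
        field_simp
        rw [had, map_mul] at hv
        rw [← hv, one_div, inv_pow, mul_inv_cancel_right₀ hgm]
      rcases hp.2.2 _ _ hpd with h2 | h2
      · obtain ⟨d, hd⟩ := h2
        exact Or.inl (key x a₁ d sx ha₁ hd)
      · obtain ⟨d, hd⟩ := h2
        exact Or.inr (key y a₂ d sy ha₂ hd)
  -- the image of `g` in `B` is a unit
  have hgBunit : IsUnit (algebraMap A ↥B g) := by
    refine isUnit_iff_exists_inv.mpr ⟨⟨(ι g)⁻¹, hhB⟩, ?_⟩
    apply Subtype.ext
    exact hginv
  -- every nonzero element of `B` is a unit or has a prime factor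
  have primefac : ∀ z : ↥B, z ≠ 0 → IsUnit z ∨ ∃ π : ↥B, Prime π ∧ π ∣ z := by
    intro z hz
    obtain ⟨m, a, hma⟩ := P1 (z : K) z.2
    have ha0 : a ≠ 0 := by
      intro h0
      apply hz
      apply Subtype.ext
      have h1 : (z : K) * ι g ^ m = 0 := by rw [hma, h0, map_zero]
      have h2 := (mul_eq_zero.mp h1).resolve_right (pow_ne_zero _ hgK)
      rw [h2, ZeroMemClass.coe_zero]
    have hzassoc : Associated z (algebraMap A ↥B a) := by
      have heq : z * algebraMap A ↥B g ^ m = algebraMap A ↥B a := by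
        apply Subtype.ext
        show (z : K) * ι g ^ m = ι a
        exact hma
      rw [← heq]
      exact associated_mul_unit_right _ _ (hgBunit.pow m)
    have main : ∀ f : Multiset A, (∀ p ∈ f, Prime p) →
        IsUnit (algebraMap A ↥B f.prod) ∨
          ∃ π : ↥B, Prime π ∧ π ∣ algebraMap A ↥B f.prod := by
      intro f
      induction f using Multiset.induction with
      | empty => intro _; left; simp only [Multiset.prod_zero, map_one]; exact isUnit_one
      | cons p f ih =>
        intro hf
        have hp : Prime p := hf p (Multiset.mem_cons_self p f)
        have hrest := ih (fun q hq => hf q (Multiset.mem_cons_of_mem hq))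
        rw [Multiset.prod_cons, map_mul]
        by_cases hpg : p ∣ g
        · have hpu : IsUnit (algebraMap A ↥B p) := by
            obtain ⟨c, hc⟩ := hpg
            have : algebraMap A ↥B p ∣ algebraMap A ↥B g :=
              ⟨algebraMap A ↥B c, by rw [← map_mul, hc]⟩
            exact isUnit_of_dvd_unit this hgBunit
          rcases hrest with h1 | ⟨π, hπ, hπd⟩
          · exact Or.inl (hpu.mul h1)
          · exact Or.inr ⟨π, hπ, hπd.mul_left _⟩
        · exact Or.inr ⟨algebraMap A ↥B p, primeB p hp hpg, Dvd.intro _ rfl⟩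
    obtain ⟨f, hfp, hfa⟩ := UniqueFactorizationMonoid.exists_prime_factors a ha0
    have hfa' : Associated (algebraMap A ↥B f.prod) (algebraMap A ↥B a) :=
      hfa.map (algebraMap A ↥B)
    rcases main f hfp with h1 | ⟨π, hπ, hπd⟩
    · exact Or.inl (hzassoc.symm.isUnit (hfa'.isUnit h1))
    · exact Or.inr ⟨π, hπ, (hπd.trans hfa'.dvd).trans hzassoc.symm.dvd⟩
  -- cancellation of powers of `g'` in `M`
  have key : ∀ (m : ℕ) (x y : ↥M), ¬ g' ∣ x → (∃ w : ↥M, x * w = g' ^ m * y) → x ∣ y := by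
    intro m
    induction m with
    | zero =>
      rintro x y _ ⟨w, hw⟩
      rw [pow_zero, one_mul] at hw
      exact ⟨w, hw.symm⟩
    | succ m ih =>
      rintro x y hx ⟨w, hw⟩
      have hg'w : g' ∣ x * w := ⟨g' ^ m * y, by linear_combination hw⟩
      rcases hg'prime.2.2 _ _ hg'w with h1 | h1
      · exact absurd h1 hx
      · obtain ⟨w', rfl⟩ := h1
        refine ih x y hx ⟨w', ?_⟩
        have h2 : g' * (x * w') = g' * (g' ^ m * y) := by linear_combination hw
        exact mul_left_cancel₀ hg'0 h2
  -- descent from `B` to `M`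
  have descend : ∀ z : ↥B, ∀ u v : ↥M, ¬ g' ∣ u → (u : K) * (z : K) = (v : K) → u ∣ v := by
    intro z u v hu huv
    obtain ⟨m, a, hma⟩ := P1 (z : K) z.2
    refine key m u v hu ⟨⟨ι a, M.algebraMap_mem a⟩, ?_⟩
    apply Subtype.ext
    show (u : K) * ι a = ((g' ^ m * v : ↥M) : K)
    push_cast
    rw [hg']
    calc (u : K) * ι a = (u : K) * ((z : K) * ι g ^ m) := by rw [hma]
      _ = ((u : K) * (z : K)) * ι g ^ m := by ring
      _ = ι g ^ m * (v : K) := by rw [huv]; ring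
  -- the inclusion `M → B`
  set inc : ↥M →ₐ[A] ↥B := Subalgebra.inclusion hMB with hinc
  have coe_inc : ∀ x : ↥M, ((inc x : ↥B) : K) = (x : K) := fun x => rfl
  have inc_ne : ∀ x : ↥M, x ≠ 0 → inc x ≠ 0 := by
    intro x hx h0
    apply hx
    apply Subtype.ext
    rw [← coe_inc x, h0, ZeroMemClass.coe_zero, ZeroMemClass.coe_zero]
  -- main step: irreducible elements of `M` are prime
  have irr_prime : ∀ q : ↥M, Irreducible q → Prime q := by
    intro q hq
    by_cases hqg : g' ∣ q
    · obtain ⟨u, rfl⟩ := hqg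
      have hu : IsUnit u := (hq.isUnit_or_isUnit rfl).resolve_left hg'prime.not_unit
      obtain ⟨v, rfl⟩ := hu
      exact (associated_mul_unit_right g' (↑v : ↥M) v.isUnit).prime hg'prime
    · have hq0 : q ≠ 0 := hq.ne_zero
      -- `inc q` is not a unit in `B`
      have hqBnu : ¬ IsUnit (inc q) := by
        intro hu
        obtain ⟨z, hz⟩ := isUnit_iff_exists_inv.mp hu
        obtain ⟨m, a, hma⟩ := P1 (z : K) z.2
        have heq : (q : K) * ι a = ι g ^ m := by
          have hz' : (q : K) * (z : K) = 1 := congrArg (fun t : ↥B => (t : K)) hz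
          calc (q : K) * ι a = (q : K) * ((z : K) * ι g ^ m) := by rw [hma]
            _ = ((q : K) * (z : K)) * ι g ^ m := by ring
            _ = ι g ^ m := by rw [hz', one_mul]
        have hq1 : q ∣ 1 := by
          refine key m q 1 hqg ⟨⟨ι a, M.algebraMap_mem a⟩, ?_⟩
          apply Subtype.ext
          show (q : K) * ι a = ((g' ^ m * 1 : ↥M) : K)
          push_cast
          rw [hg', heq, mul_one]
        exact hq.not_isUnit (isUnit_of_dvd_one hq1)
      -- find a prime factor of `inc q` in `B`
      rcases primefac (inc q) (inc_ne q hq0) with hu | ⟨π, hπ, hπd⟩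
      · exact absurd hu hqBnu
      -- normalize the prime factor into `M`
      obtain ⟨m, a, hma⟩ := P1 (π : K) π.2
      have hamem : ι a ∈ M := M.algebraMap_mem a
      have hw00 : (⟨ι a, hamem⟩ : ↥M) ≠ 0 := by
        intro h0
        have ha0 : ι a = 0 := congrArg Subtype.val h0
        have hπ0 : (π : K) = 0 := by
          have h1 : (π : K) * ι g ^ m = 0 := by rw [hma, ha0]
          exact (mul_eq_zero.mp h1).resolve_right (pow_ne_zero _ hgK)
        exact hπ.ne_zero (Subtype.ext hπ0)
      obtain ⟨k, π₀, hπ₀g, hw0eq⟩ := WfDvdMonoid.max_power_factor hw00 hg'prime.irreducible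
      have hπ₀0 : π₀ ≠ 0 := by
        intro h0
        apply hw00
        rw [hw0eq, h0, mul_zero]
      -- `inc π₀` is associated to `π`
      have hassoc : Associated π (inc π₀) := by
        have hKa : ι a = ι g ^ k * (π₀ : K) := by
          have h1 : ((⟨ι a, hamem⟩ : ↥M) : K) = ((g' ^ k * π₀ : ↥M) : K) :=
            congrArg (fun t : ↥M => (t : K)) hw0eq
          push_cast at h1
          rw [hg'] at h1
          exact h1
        have hBeq : π * algebraMap A ↥B g ^ m = inc π₀ * algebraMap A ↥B g ^ k := by
          apply Subtype.ext
          show (π : K) * ι g ^ m = (π₀ : K) * ι g ^ k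
          rw [hma, hKa]
          ring
        have h1 : Associated π (π * algebraMap A ↥B g ^ m) :=
          associated_mul_unit_right _ _ (hgBunit.pow m)
        have h2 : Associated (inc π₀) (inc π₀ * algebraMap A ↥B g ^ k) :=
          associated_mul_unit_right _ _ (hgBunit.pow k)
        exact (h1.trans (hBeq ▸ Associated.refl _)).trans h2.symm
      have hπ₀prime : Prime (inc π₀) := hassoc.prime hπ
      -- `π₀` divides `q` in `M`
      obtain ⟨z, hz⟩ := hassoc.symm.dvd.trans hπd
      have hπ₀q : π₀ ∣ q := by
        refine descend z π₀ q hπ₀g ?_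
        have h1 : ((inc q : ↥B) : K) = ((inc π₀ * z : ↥B) : K) :=
          congrArg (fun t : ↥B => (t : K)) hz
        push_cast at h1
        rw [coe_inc, coe_inc] at h1
        exact h1.symm
      obtain ⟨w', hqw⟩ := hπ₀q
      rcases hq.isUnit_or_isUnit hqw with h1 | h1
      · exact absurd (h1.map inc) hπ₀prime.not_unit
      · -- `q` is associated to `π₀`, hence `inc q` is prime
        have hassocq : Associated π₀ q := ⟨h1.unit, by rw [IsUnit.unit_spec]; exact hqw.symm⟩
        have hqBprime : Prime (inc q) := (hassocq.map inc).prime hπ₀prime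
        -- now prove `q` is prime in `M`
        refine ⟨hq0, hq.not_isUnit, ?_⟩
        rintro x y ⟨c, hc⟩
        rcases eq_or_ne x 0 with rfl | hx0
        · exact Or.inl (dvd_zero _)
        rcases eq_or_ne y 0 with rfl | hy0
        · exact Or.inr (dvd_zero _)
        obtain ⟨i, x₀, hx₀g, hxeq⟩ := WfDvdMonoid.max_power_factor hx0 hg'prime.irreducible
        obtain ⟨j, y₀, hy₀g, hyeq⟩ := WfDvdMonoid.max_power_factor hy0 hg'prime.irreducible
        have hqd : q ∣ x₀ * y₀ := by
          refine key (i + j) _ _ hqg ⟨c, ?_⟩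
          rw [← hc, hxeq, hyeq, pow_add]
          ring
        obtain ⟨d, hd⟩ := hqd
        have hBdvd : inc q ∣ inc x₀ * inc y₀ := by
          rw [← map_mul]
          exact ⟨inc d, by rw [← map_mul, hd]⟩
        have hfin : ∀ t₀ : ↥M, ¬ g' ∣ t₀ → inc q ∣ inc t₀ → q ∣ t₀ := by
          rintro t₀ ht₀g ⟨z', hz'⟩
          refine descend z' q t₀ hqg ?_
          have h2 : ((inc t₀ : ↥B) : K) = ((inc q * z' : ↥B) : K) :=
            congrArg (fun t : ↥B => (t : K)) hz'
          push_cast at h2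
          rw [coe_inc, coe_inc] at h2
          exact h2.symm
        rcases hqBprime.2.2 _ _ hBdvd with h2 | h2
        · left
          exact (hfin x₀ hx₀g h2).trans ⟨g' ^ i, by rw [hxeq]; ring⟩
        · right
          exact (hfin y₀ hy₀g h2).trans ⟨g' ^ j, by rw [hyeq]; ring⟩
  exact { ‹WfDvdMonoid ↥M› with
    irreducible_iff_prime := fun {a} => ⟨irr_prime a, Prime.irreducible⟩ }

/-- **Proposition 2.13(2)**: let `A` be a finitely generated `ℂ`-algebra which is a
normal domain with fraction field `K` and a UFD, `g` a nonzero non-unit, `f = gⁿ ∈ I`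
(`n ≥ 1`), and let the affine modification `A' = A[I/f]` also be normal.  Suppose the
divisor `D` is irreducible (the radical of `gA` is prime) and the exceptional divisor
`E` is irreducible with defining ideal in `A'` generated by the image `g'` of `g` (the
principal ideal `g'A'` is prime).  Then `A'` is a UFD. -/
theorem stmt15 (A K : Type*) [CommRing A] [IsDomain A] [Algebra ℂ A]
    [Algebra.FiniteType ℂ A] [IsIntegrallyClosed A] [UniqueFactorizationMonoid A]
    [Field K] [Algebra A K] [IsFractionRing A K]
    (I : Ideal A) (g : A) (hg0 : g ≠ 0) (hgu : ¬ IsUnit g) (n : ℕ) (hn : 1 ≤ n)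
    (hfI : g ^ n ∈ I)
    (hnormal' : IsIntegrallyClosed ↥(affineModification A K I (g ^ n)))
    (hD : ((Ideal.span {g} : Ideal A).radical).IsPrime)
    (g' : ↥(affineModification A K I (g ^ n))) (hg' : (g' : K) = algebraMap A K g)
    (hE : (Ideal.span {g'}).IsPrime) :
    UniqueFactorizationMonoid ↥(affineModification A K I (g ^ n)) := by
  classical
  have hι : Function.Injective (algebraMap A K) := IsFractionRing.injective A K
  have hgK : algebraMap A K g ≠ 0 := fun h0 => hg0 (hι (by rw [h0, map_zero]))
  haveI : IsNoetherianRing A := Algebra.FiniteType.isNoetherianRing ℂ A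
  -- `g'` is prime
  have hg'0 : g' ≠ 0 := by
    intro h0
    apply hgK
    rw [← hg', h0, ZeroMemClass.coe_zero]
  have hg'prime : Prime g' := (Ideal.span_singleton_prime hg'0).mp hE
  -- the affine modification is a Noetherian ring
  obtain ⟨s, hs⟩ : I.FG := IsNoetherian.noetherian I
  have hMfg : (affineModification A K I (g ^ n)).FG := by
    refine ⟨s.image (fun b => algebraMap A K b / algebraMap A K (g ^ n)),
      le_antisymm ?_ ?_⟩
    · apply Algebra.adjoin_le
      intro x hx
      simp only [Finset.coe_image, Set.mem_image, Finset.mem_coe] at hx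
      obtain ⟨b, hb, rfl⟩ := hx
      exact Algebra.subset_adjoin ⟨b, by rw [← hs]; exact Ideal.subset_span hb, rfl⟩
    · have key2 : ∀ b ∈ I, algebraMap A K b / algebraMap A K (g ^ n) ∈
          Algebra.adjoin A
            ((s.image (fun b => algebraMap A K b / algebraMap A K (g ^ n)) : Finset K) :
              Set K) := by
        intro b hb
        have hb' : b ∈ Ideal.span (s : Set A) := by rw [hs]; exact hb
        clear hb
        induction hb' using Submodule.span_induction with
        | mem x hx =>
          exact Algebra.subset_adjoin
            (Finset.mem_coe.mpr (Finset.mem_image_of_mem _ (Finset.mem_coe.mp hx)))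
        | zero => simp only [map_zero, zero_div]; exact zero_mem _
        | add x y hx hy ihx ihy =>
          simp only [map_add, add_div]
          exact add_mem ihx ihy
        | smul a x hx ih =>
          simp only [smul_eq_mul, map_mul, mul_div_assoc, ← Algebra.smul_def, smul_div_assoc]
          exact Subalgebra.smul_mem _ ih a
      rw [affineModification]
      apply Algebra.adjoin_le
      rintro x ⟨b, hb, rfl⟩
      exact key2 b hb
  haveI : Algebra.FiniteType A ↥(affineModification A K I (g ^ n)) :=
    (Subalgebra.fg_iff_finiteType _).mp hMfg
  haveI : IsNoetherianRing ↥(affineModification A K I (g ^ n)) :=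
    Algebra.FiniteType.isNoetherianRing A _
  -- the affine modification lies in `A[1/g]`
  have hMg : ∀ x ∈ affineModification A K I (g ^ n),
      ∃ (m : ℕ) (a : A), x * algebraMap A K g ^ m = algebraMap A K a := by
    intro x hx
    rw [affineModification] at hx
    induction hx using Algebra.adjoin_induction with
    | mem x hx =>
      obtain ⟨b, hb, rfl⟩ := hx
      refine ⟨n, b, ?_⟩
      simp only [map_pow]
      exact div_mul_cancel₀ _ (pow_ne_zero n hgK)
    | algebraMap r => exact ⟨0, r, by rw [pow_zero, mul_one]⟩
    | add x y hx hy ihx ihy =>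
      obtain ⟨mx, a, ha⟩ := ihx
      obtain ⟨my, b, hb⟩ := ihy
      refine ⟨mx + my, a * g ^ my + b * g ^ mx, ?_⟩
      rw [map_add, map_mul, map_mul, map_pow, map_pow, ← ha, ← hb]
      ring
    | mul x y hx hy ihx ihy =>
      obtain ⟨mx, a, ha⟩ := ihx
      obtain ⟨my, b, hb⟩ := ihy
      refine ⟨mx + my, a * b, ?_⟩
      rw [map_mul, ← ha, ← hb]
      ring
  exact nagata_aux A K hι g hgK _ hMg g' hg' hg'prime
end

section
/- Let A be an integral domain which is a ℂ-algebra, let ∂ be a nonzero locally nilpotent derivation of A, and let b ∈ A satisfy deg_∂(b) = 1, i.e. ∂(b) ≠ 0 and ∂²(b) = 0. Then for every nonzero a ∈ A with deg_∂(a) = k (i.e. ∂^k(a) ≠ 0 and ∂^{k+1}(a) = 0) there exist elements a', a₀, a₁, …, a_k ∈ Ker ∂ with a' ≠ 0 and a_k ≠ 0 such that a'·a = a₀ + a₁·b + a₂·b² + … + a_k·b^k. -/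
open Finset

noncomputable def Faux {A : Type*} [CommRing A] [Algebra ℂ A]
    (D : Derivation ℂ A A) (b : A) : ℕ → A → A
  | 0, x => x
  | n+1, x => D b * Faux D b n x +
      (((-1)^(n+1) / (n+1).factorial : ℂ)) • ((D.toLinearMap ^ (n+1)) x * b^(n+1))


lemma Faux_deriv {A : Type*} [CommRing A] [Algebra ℂ A]
    (D : Derivation ℂ A A) (b : A) (hb2 : D (D b) = 0) (n : ℕ) (x : A) :
    D (Faux D b n x) = (((-1)^n / n.factorial : ℂ)) • ((D.toLinearMap ^ (n+1)) x * b^n) := by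
  induction n generalizing x with
  | zero => simp [Faux]
  | succ n ih =>
    have hpow : (D.toLinearMap ^ (n+2)) x = D ((D.toLinearMap ^ (n+1)) x) := by
      rw [pow_succ' (D.toLinearMap) (n+1)]; rfl
    have key : ((-1)^(n+1)/((n+1).factorial : ℂ)) * (n+1) + (-1)^n/(n.factorial : ℂ) = 0 := by
      have h1 : ((n.factorial : ℂ)) ≠ 0 := Nat.cast_ne_zero.2 n.factorial_ne_zero
      have h2 : (((n+1).factorial : ℂ)) ≠ 0 := Nat.cast_ne_zero.2 (n+1).factorial_ne_zero
      rw [Nat.factorial_succ] at h2 ⊢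
      push_cast at h2 ⊢
      field_simp
      ring
    have keyA := congrArg (algebraMap ℂ A) key
    rw [map_add, map_mul, map_zero] at keyA
    rw [Faux, map_add, D.leibniz, hb2, D.map_smul, D.leibniz, D.leibniz_pow, ih]
    rw [show n + 1 + 1 = n + 2 from rfl, hpow]
    simp only [smul_eq_mul, Algebra.smul_def, nsmul_eq_mul, map_mul, map_pow, map_natCast,
      map_div₀, map_one, map_neg, map_ofNat]
    push_cast at keyA ⊢
    linear_combination (norm := (push_cast; ring_nf; simp)) (((D.toLinearMap ^ (n+1)) x) * b ^ n * D b) * keyA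

lemma binom_alt (n : ℕ) :
    ∑ j ∈ range (n + 2), ((-1 : ℂ)) ^ (n + 1 - j) / (j.factorial * (n + 1 - j).factorial) = 0 := by
  have h := Int.alternating_sum_range_choose (n := n + 1)
  rw [if_neg (Nat.succ_ne_zero n)] at h
  have hC : ∑ j ∈ range (n + 2), ((-1 : ℂ)) ^ j * ((n+1).choose j : ℂ) = 0 := by
    have := congrArg (fun z : ℤ => (z : ℂ)) h
    push_cast at this
    simpa using this
  have hfac : ((n+1).factorial : ℂ) ≠ 0 := Nat.cast_ne_zero.2 (n+1).factorial_ne_zero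
  have key : ∀ j ∈ range (n + 2),
      ((-1 : ℂ)) ^ (n + 1 - j) / (j.factorial * (n + 1 - j).factorial)
        = (-1 : ℂ) ^ (n+1) * (((-1:ℂ)) ^ j * ((n+1).choose j : ℂ)) / ((n+1).factorial : ℂ) := by
    intro j hj
    have hjle : j ≤ n + 1 := Nat.lt_succ_iff.mp (mem_range.mp hj)
    rw [Nat.cast_choose ℂ hjle]
    have h1 : ((j.factorial : ℂ)) ≠ 0 := Nat.cast_ne_zero.2 j.factorial_ne_zero
    have h2 : (((n + 1 - j).factorial : ℂ)) ≠ 0 := Nat.cast_ne_zero.2 (n+1-j).factorial_ne_zero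
    have hsgn : ((-1 : ℂ)) ^ (n + 1 - j) = (-1 : ℂ) ^ (n+1) * (-1 : ℂ) ^ j := by
      have : (-1 : ℂ) ^ (n + 1 - j) * (-1) ^ j = (-1) ^ (n + 1) := by
        rw [← pow_add, Nat.sub_add_cancel hjle]
      have sq : ((-1 : ℂ)) ^ j * (-1) ^ j = 1 := by
        rw [← pow_add, ← two_mul, pow_mul]; norm_num
      calc ((-1 : ℂ)) ^ (n + 1 - j) = (-1 : ℂ) ^ (n + 1 - j) * ((-1) ^ j * (-1) ^ j) := by
            rw [sq, mul_one]
        _ = ((-1 : ℂ)) ^ (n + 1 - j) * (-1) ^ j * (-1) ^ j := by ring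
        _ = (-1 : ℂ) ^ (n+1) * (-1 : ℂ) ^ j := by rw [this]
    rw [hsgn]
    field_simp
  rw [Finset.sum_congr rfl key, ← Finset.sum_div, ← Finset.mul_sum, hC]
  simp

lemma Faux_sum {A : Type*} [CommRing A] [Algebra ℂ A]
    (D : Derivation ℂ A A) (b : A) (n : ℕ) (x : A) :
    ∑ j ∈ range (n + 1), ((1 / j.factorial : ℂ)) • Faux D b (n - j) ((D.toLinearMap ^ j) x) * b ^ j
      = (D b) ^ n * x := by
  induction n with
  | zero => simp [Faux]
  | succ n ih =>
    have hsplit : ∀ j ∈ range (n + 1),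
        ((1 / j.factorial : ℂ)) • Faux D b (n + 1 - j) ((D.toLinearMap ^ j) x) * b ^ j
          = D b * (((1 / j.factorial : ℂ)) • Faux D b (n - j) ((D.toLinearMap ^ j) x) * b ^ j)
            + (((-1 : ℂ)) ^ (n + 1 - j) / (j.factorial * (n + 1 - j).factorial))
                • ((D.toLinearMap ^ (n + 1)) x * b ^ (n + 1)) := by
      intro j hj
      have hjle : j ≤ n := Nat.lt_succ_iff.mp (mem_range.mp hj)
      have h1 : n + 1 - j = n - j + 1 := by omega
      rw [h1, Faux]
      have hDpow : (D.toLinearMap ^ (n - j + 1)) ((D.toLinearMap ^ j) x)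
          = (D.toLinearMap ^ (n + 1)) x := by
        conv_rhs => rw [show n + 1 = (n - j + 1) + j by omega, pow_add]
        rfl
      rw [hDpow]
      have hb : b ^ (n - j + 1) * b ^ j = b ^ (n + 1) := by rw [← pow_add]; congr 1; omega
      simp only [smul_add, add_mul, smul_smul, smul_mul_assoc, mul_smul_comm, mul_assoc, hb,
        div_mul_div_comm, one_mul]
    rw [Finset.sum_range_succ, Finset.sum_congr rfl hsplit, Finset.sum_add_distrib,
      ← Finset.mul_sum, ih, ← Finset.sum_smul]
    have hS : ∑ j ∈ range (n + 1),
        ((-1 : ℂ)) ^ (n + 1 - j) / (j.factorial * (n + 1 - j).factorial)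
          = -(1 / ((n + 1).factorial : ℂ)) := by
      have h := binom_alt n
      rw [Finset.sum_range_succ] at h
      simp only [Nat.sub_self, pow_zero, Nat.factorial_zero, Nat.cast_one, mul_one] at h
      linear_combination h
    rw [hS]
    simp only [Nat.sub_self]
    rw [show Faux D b 0 ((D.toLinearMap ^ (n + 1)) x) = (D.toLinearMap ^ (n + 1)) x from rfl]
    rw [smul_mul_assoc, neg_smul]
    rw [show D b ^ (n + 1) * x = D b * (D b ^ n * x) by ring]
    abel

/-- **Theorem 5.1(2)**: let `A` be a domain over `ℂ`, `∂` a nonzero locally nilpotent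
derivation of `A`, and `b ∈ A` with `deg_∂ b = 1` (`∂ b ≠ 0`, `∂² b = 0`).  Then for
every nonzero `a ∈ A` with `deg_∂ a = k` there exist `a', a₀, …, a_k ∈ Ker ∂` with
`a' ≠ 0` and `a_k ≠ 0` such that `a'·a = a₀ + a₁ b + … + a_k b^k`. -/
theorem stmt17 (A : Type*) [CommRing A] [IsDomain A] [Algebra ℂ A]
    (D : Derivation ℂ A A) (hD : D ≠ 0)
    (hln : ∀ x : A, ∃ k : ℕ, (D.toLinearMap ^ k) x = 0)
    (b : A) (hb1 : D b ≠ 0) (hb2 : D (D b) = 0)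
    (a : A) (ha : a ≠ 0) (k : ℕ)
    (hak : (D.toLinearMap ^ k) a ≠ 0) (hak1 : (D.toLinearMap ^ (k + 1)) a = 0) :
    ∃ (a' : A) (c : Fin (k + 1) → A), a' ≠ 0 ∧ D a' = 0 ∧ (∀ j, D (c j) = 0) ∧
      c (Fin.last k) ≠ 0 ∧ a' * a = ∑ j : Fin (k + 1), c j * b ^ (j : ℕ) := by
  refine ⟨(D b) ^ k,
    fun j => ((1 / (j : ℕ).factorial : ℂ)) • Faux D b (k - (j : ℕ)) ((D.toLinearMap ^ (j : ℕ)) a),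
    pow_ne_zero k hb1, ?_, ?_, ?_, ?_⟩
  · rw [Derivation.leibniz_pow, hb2]; simp
  · intro j
    have hjle : (j : ℕ) ≤ k := Nat.lt_succ_iff.mp j.isLt
    rw [Derivation.map_smul, Faux_deriv D b hb2]
    have hDpow : (D.toLinearMap ^ (k - (j : ℕ) + 1)) ((D.toLinearMap ^ (j : ℕ)) a)
        = (D.toLinearMap ^ (k + 1)) a := by
      conv_rhs => rw [show k + 1 = (k - (j : ℕ) + 1) + (j : ℕ) by omega, pow_add]
      rfl
    rw [hDpow, hak1]
    simp
  · simp only [Fin.val_last, Nat.sub_self]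
    rw [show Faux D b 0 ((D.toLinearMap ^ k) a) = (D.toLinearMap ^ k) a from rfl,
      Algebra.smul_def]
    refine mul_ne_zero (fun h0 => ?_) hak
    have h1 : (1 / (k.factorial : ℂ)) = 0 :=
      (algebraMap ℂ A).injective (by rw [h0, map_zero])
    exact one_div_ne_zero (Nat.cast_ne_zero.2 k.factorial_ne_zero) h1
  · rw [Fin.sum_univ_eq_sum_range
      (fun j => ((1 / (j : ℕ).factorial : ℂ)) • Faux D b (k - j) ((D.toLinearMap ^ j) a) * b ^ j),
      Faux_sum]
end

section
/- Let A be an integral domain which is a ℂ-algebra, and let ∂ and δ be two nonzero locally nilpotent derivations of A. Then ∂ and δ are equivalent (Ker ∂ = Ker δ) if and only if they generate the same degree function, i.e. for every nonzero a ∈ A and every k ∈ ℕ one has ∂^k(a) = 0 if and only if δ^k(a) = 0. Furthermore, if Ker ∂ = Ker δ then there exist nonzero elements α, β ∈ Ker ∂ such that α·∂ = β·δ, i.e. α·∂(a) = β·δ(a) for all a ∈ A. -/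
/-!
Pick a local slice `r` of `D` (`D r ≠ 0`, `D (D r) = 0`) and let `K = Ker D`. Integrating
polynomials over `K` shows that every `a` satisfies `(D r)^m a ∈ K[r]` for some `m`, and on `K[r]`
both derivations act by the chain rule `P(r) ↦ P'(r) · D r`, resp. `P'(r) · E r`, once they share
the kernel `K`; hence `E r · D = D r · E`. If `E r ∉ K`, write `(D r)^m E r = P(r)` with
`deg P ≥ 1`; iterating `E` gives `(D r)^(km) E^k r = P_k(r)` with `P_(k+1) = P_k' P`, so
`deg P_k ≥ 1` for all `k`, and since `r` is transcendental over `K`, `E^k r` never vanishes.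
Finally `α D = β E` with `α, β ∈ K` gives `α^k D^k = β^k E^k`, so the degree functions agree.
-/

open Polynomial

theorem Polynomial.exists_derivative_eq {F R : Type*} [Field F] [CharZero F] [CommRing R]
    [Algebra F R] (P : R[X]) : ∃ Q : R[X], derivative Q = P := by
  refine ⟨P.sum fun i c => C (((i : F) + 1)⁻¹ • c) * X ^ (i + 1), ?_⟩
  rw [Polynomial.sum_def, map_sum]
  conv_rhs => rw [P.as_sum_support_C_mul_X_pow]
  refine Finset.sum_congr rfl fun i _ => ?_
  rw [derivative_C_mul_X_pow, Nat.add_sub_cancel, ← nsmul_eq_mul', ← Nat.cast_smul_eq_nsmul F,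
    smul_smul, Nat.cast_add_one, mul_inv_cancel₀ (Nat.cast_add_one_ne_zero i), one_smul]

namespace Derivation

variable {R A : Type*} [CommRing R] [CommRing A] [Algebra R A]

def kerSubalgebra (D : Derivation R A A) : Subalgebra R A where
  carrier := {a | D a = 0}
  mul_mem' {a b} ha hb := by simp_all [leibniz]
  add_mem' {a b} ha hb := by simp_all
  algebraMap_mem' := D.map_algebraMap

theorem map_mul_of_map_eq_zero (D : Derivation R A A) {c : A} (hc : D c = 0) (a : A) :
    D (c * a) = c * D a := by
  rw [leibniz, hc, smul_zero, add_zero, smul_eq_mul]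

def overSubalgebra (D : Derivation R A A) (K : Subalgebra R A) (hK : K ≤ D.kerSubalgebra) :
    Derivation K A A where
  toFun := D
  map_add' := D.map_add
  map_smul' k a := D.map_mul_of_map_eq_zero (hK k.2) a
  map_one_eq_zero' := D.map_one_eq_zero
  leibniz' := D.leibniz

theorem map_aeval_of_le_kerSubalgebra (D : Derivation R A A) {K : Subalgebra R A}
    (hK : K ≤ D.kerSubalgebra) (r : A) (P : K[X]) :
    D (aeval r P) = aeval r (derivative P) * D r :=
  (D.overSubalgebra K hK).map_aeval P r

theorem transcendental_of_map_ne_zero [IsDomain A] [CharZero A] (D : Derivation R A A)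
    {K : Subalgebra R A} (hK : K ≤ D.kerSubalgebra) {r : A} (hr : D r ≠ 0) :
    Transcendental K r := by
  refine transcendental_iff.2 fun P hP => ?_
  induction hn : P.natDegree using Nat.strong_induction_on generalizing P with
  | _ n ih =>
    have hP' : aeval r (derivative P) = 0 := by
      have h := congrArg D hP
      rwa [map_aeval_of_le_kerSubalgebra D hK, D.map_zero, mul_eq_zero, or_iff_left hr] at h
    have hn0 : n = 0 := by
      by_contra hn0
      have h := ih _ (hn ▸ natDegree_derivative_lt (hn ▸ hn0)) _ hP' rfl
      exact hn0 (hn ▸ derivative_eq_zero.1 h)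
    have hPC := eq_C_of_natDegree_eq_zero (hn.trans hn0)
    rw [hPC, aeval_C, FaithfulSMul.algebraMap_eq_zero_iff] at hP
    rw [hPC, hP, C_0]

def IsLocallyNilpotent (D : Derivation R A A) : Prop :=
  ∀ a, ∃ k, (⇑D)^[k] a = 0

theorem exists_map_ne_zero_map_map_eq_zero {D : Derivation R A A} (hD : D ≠ 0)
    (hnil : D.IsLocallyNilpotent) : ∃ r, D r ≠ 0 ∧ D (D r) = 0 := by
  obtain ⟨a, ha⟩ : ∃ a, D a ≠ 0 := by
    by_contra! h
    exact hD (ext h)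
  obtain ⟨k, hk⟩ := hnil a
  induction k generalizing a with
  | zero => exact absurd (by simp [show a = 0 from hk]) ha
  | succ k ih =>
    by_cases hDDa : D (D a) = 0
    · exact ⟨a, ha, hDDa⟩
    · exact ih (D a) hDDa hk

theorem iterate_ne_zero_of_pow_mul_eq_aeval [IsDomain A] [CharZero A] (E : Derivation R A A)
    {K : Subalgebra R A} (hK : K ≤ E.kerSubalgebra) {r f : A} (hr : Transcendental K r)
    (hf : E f = 0) {m : ℕ} {P : K[X]} (hP : f ^ m * E r = aeval r P) (hdeg : 0 < P.natDegree)
    (k : ℕ) : (⇑E)^[k] r ≠ 0 := by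
  have hfpow (n : ℕ) : E (f ^ n) = 0 := E.kerSubalgebra.pow_mem hf n
  have key : ∀ k, ∃ Q : K[X], 0 < Q.natDegree ∧ f ^ (k * m) * (⇑E)^[k] r = aeval r Q := by
    intro k
    induction k with
    | zero => exact ⟨X, by simp, by simp⟩
    | succ k ih =>
      obtain ⟨Q, hQ, hQr⟩ := ih
      have hQ' : derivative Q ≠ 0 := derivative_ne_zero.2 hQ.ne'
      have hP0 : P ≠ 0 := ne_zero_of_natDegree_gt hdeg
      refine ⟨derivative Q * P, by rw [natDegree_mul hQ' hP0]; omega, ?_⟩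
      calc f ^ ((k + 1) * m) * (⇑E)^[k + 1] r
          = f ^ m * E (f ^ (k * m) * (⇑E)^[k] r) := by
            rw [E.map_mul_of_map_eq_zero (hfpow _), Function.iterate_succ_apply']; ring
        _ = aeval r (derivative Q) * (f ^ m * E r) := by
            rw [hQr, map_aeval_of_le_kerSubalgebra E hK]; ring
        _ = aeval r (derivative Q * P) := by rw [hP, map_mul]
  obtain ⟨Q, hQ, hQr⟩ := key k
  intro hk
  rw [hk, mul_zero, eq_comm] at hQr
  exact (ne_zero_of_natDegree_gt hQ) (transcendental_iff.1 hr Q hQr)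

theorem pow_mul_iterate_eq_pow_mul_iterate (D E : Derivation R A A) {α β : A} (hDα : D α = 0)
    (hEβ : E β = 0) (h : ∀ a, α * D a = β * E a) (k : ℕ) (a : A) :
    α ^ k * (⇑D)^[k] a = β ^ k * (⇑E)^[k] a := by
  induction k with
  | zero => simp
  | succ k ih =>
    calc α ^ (k + 1) * (⇑D)^[k + 1] a = α * D (α ^ k * (⇑D)^[k] a) := by
          rw [Function.iterate_succ_apply',
            D.map_mul_of_map_eq_zero (D.kerSubalgebra.pow_mem hDα k)]
          ring
      _ = β ^ (k + 1) * (⇑E)^[k + 1] a := by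
          rw [h, ih, Function.iterate_succ_apply',
            E.map_mul_of_map_eq_zero (E.kerSubalgebra.pow_mem hEβ k)]
          ring

theorem iterate_eq_zero_iff_of_mul_eq_mul [IsDomain A] (D E : Derivation R A A) {α β : A}
    (hα : α ≠ 0) (hβ : β ≠ 0) (hDα : D α = 0) (hEβ : E β = 0) (h : ∀ a, α * D a = β * E a)
    (k : ℕ) (a : A) : (⇑D)^[k] a = 0 ↔ (⇑E)^[k] a = 0 := by
  have := pow_mul_iterate_eq_pow_mul_iterate D E hDα hEβ h k a
  constructor <;> intro h0 <;> simp_all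

section OverField

variable {F A : Type*} [Field F] [CharZero F] [CommRing A] [Algebra F A] {D E : Derivation F A A}

theorem exists_pow_mul_eq_aeval (hD : D.IsLocallyNilpotent) {r : A}
    (hr : D (D r) = 0) (a : A) : ∃ (m : ℕ) (P : D.kerSubalgebra[X]), D r ^ m * a = aeval r P := by
  obtain ⟨k, hk⟩ := hD a
  induction k generalizing a with
  | zero => exact ⟨0, 0, by simp [show a = 0 from hk]⟩
  | succ k ih =>
    obtain ⟨m, P, hP⟩ := ih (D a) hk
    obtain ⟨Q, rfl⟩ := P.exists_derivative_eq (F := F)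
    have hc : D (D r ^ (m + 1) * a - aeval r Q) = 0 := by
      rw [D.map_sub, D.map_mul_of_map_eq_zero (D.kerSubalgebra.pow_mem hr _),
        D.map_aeval_of_le_kerSubalgebra le_rfl, ← hP]
      ring
    exact ⟨m + 1, Q + C ⟨_, hc⟩, by simp⟩

variable [IsDomain A]

theorem mul_map_eq_mul_map (hD : D.IsLocallyNilpotent)
    (hDE : D.kerSubalgebra ≤ E.kerSubalgebra) {r : A} (hr0 : D r ≠ 0) (hr : D (D r) = 0)
    (a : A) : E r * D a = D r * E a := by
  obtain ⟨m, P, hP⟩ := D.exists_pow_mul_eq_aeval hD hr a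
  refine mul_left_cancel₀ (pow_ne_zero m hr0) ?_
  calc D r ^ m * (E r * D a) = E r * D (D r ^ m * a) := by
        rw [D.map_mul_of_map_eq_zero (D.kerSubalgebra.pow_mem hr m)]; ring
    _ = D r * E (D r ^ m * a) := by
        rw [hP, D.map_aeval_of_le_kerSubalgebra le_rfl, E.map_aeval_of_le_kerSubalgebra hDE]; ring
    _ = D r ^ m * (D r * E a) := by
        rw [E.map_mul_of_map_eq_zero (hDE (D.kerSubalgebra.pow_mem hr m))]; ring

theorem map_map_eq_zero (hD : D.IsLocallyNilpotent) (hE : E.IsLocallyNilpotent)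
    (hDE : D.kerSubalgebra ≤ E.kerSubalgebra) {r : A} (hr0 : D r ≠ 0) (hr : D (D r) = 0) :
    D (E r) = 0 := by
  have := charZero_of_injective_algebraMap (algebraMap F A).injective
  obtain ⟨m, P, hP⟩ := D.exists_pow_mul_eq_aeval hD hr (E r)
  rcases Nat.eq_zero_or_pos P.natDegree with hdeg | hdeg
  · have h : D (D r ^ m * E r) = 0 := by
      rw [hP, eq_C_of_natDegree_eq_zero hdeg, aeval_C]
      exact (P.coeff 0).2
    rwa [D.map_mul_of_map_eq_zero (D.kerSubalgebra.pow_mem hr m), mul_eq_zero,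
      or_iff_right (pow_ne_zero m hr0)] at h
  · obtain ⟨k, hk⟩ := hE r
    exact absurd hk <| E.iterate_ne_zero_of_pow_mul_eq_aeval hDE
      (D.transcendental_of_map_ne_zero le_rfl hr0) (hDE hr) hP hdeg k

theorem exists_mul_eq_mul_of_kerSubalgebra_eq (hD0 : D ≠ 0)
    (hD : D.IsLocallyNilpotent) (hE : E.IsLocallyNilpotent)
    (hDE : D.kerSubalgebra = E.kerSubalgebra) :
    ∃ α β : A, α ≠ 0 ∧ β ≠ 0 ∧ D α = 0 ∧ D β = 0 ∧ ∀ a, α * D a = β * E a := by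
  obtain ⟨r, hr0, hr⟩ := exists_map_ne_zero_map_map_eq_zero hD0 hD
  exact ⟨E r, D r, fun h => hr0 (hDE ▸ h : r ∈ D.kerSubalgebra), hr0,
    D.map_map_eq_zero hD hE hDE.le hr0 hr, hr, D.mul_map_eq_mul_map hD hDE.le hr0 hr⟩

end OverField

end Derivation

theorem stmt18_general (A : Type*) [CommRing A] [IsDomain A] [Algebra ℂ A]
    (D E : Derivation ℂ A A) (hD : D ≠ 0)
    (hlnD : ∀ a : A, ∃ k : ℕ, (D.toLinearMap ^ k) a = 0)
    (hlnE : ∀ a : A, ∃ k : ℕ, (E.toLinearMap ^ k) a = 0) :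
    ((∀ a : A, D a = 0 ↔ E a = 0) ↔
      (∀ a : A, a ≠ 0 → ∀ k : ℕ,
        (D.toLinearMap ^ k) a = 0 ↔ (E.toLinearMap ^ k) a = 0)) ∧
    ((∀ a : A, D a = 0 ↔ E a = 0) →
      ∃ α β : A, α ≠ 0 ∧ β ≠ 0 ∧ D α = 0 ∧ D β = 0 ∧
        ∀ a : A, α * D a = β * E a) := by
  simp only [Module.End.pow_apply] at hlnD hlnE ⊢
  have hcoeff (hker : ∀ a : A, D a = 0 ↔ E a = 0) :=
    Derivation.exists_mul_eq_mul_of_kerSubalgebra_eq hD hlnD hlnE (SetLike.ext hker)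
  refine ⟨⟨fun hker a _ k => ?_, fun hdeg a => ?_⟩, hcoeff⟩
  · obtain ⟨α, β, hα, hβ, hDα, hDβ, h⟩ := hcoeff hker
    exact D.iterate_eq_zero_iff_of_mul_eq_mul E hα hβ hDα ((hker β).1 hDβ) h k a
  · rcases eq_or_ne a 0 with rfl | ha
    · simp
    · exact hdeg a ha 1

/-- **Theorem 5.1(3)**: two nonzero locally nilpotent derivations `∂, δ` of a domain `A`
over `ℂ` are equivalent (`Ker ∂ = Ker δ`) iff they generate the same degree function
(for every nonzero `a` and every `k`, `∂^k a = 0 ↔ δ^k a = 0`).  Furthermore, if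
`Ker ∂ = Ker δ` then there exist nonzero `α, β ∈ Ker ∂` with `α·∂ = β·δ`. -/
theorem stmt18 (A : Type*) [CommRing A] [IsDomain A] [Algebra ℂ A]
    (D E : Derivation ℂ A A) (hD : D ≠ 0) (hE : E ≠ 0)
    (hlnD : ∀ a : A, ∃ k : ℕ, (D.toLinearMap ^ k) a = 0)
    (hlnE : ∀ a : A, ∃ k : ℕ, (E.toLinearMap ^ k) a = 0) :
    ((∀ a : A, D a = 0 ↔ E a = 0) ↔
      (∀ a : A, a ≠ 0 → ∀ k : ℕ,
        (D.toLinearMap ^ k) a = 0 ↔ (E.toLinearMap ^ k) a = 0)) ∧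
    ((∀ a : A, D a = 0 ↔ E a = 0) →
      ∃ α β : A, α ≠ 0 ∧ β ≠ 0 ∧ D α = 0 ∧ D β = 0 ∧
        ∀ a : A, α * D a = β * E a) :=
  stmt18_general A D E hD hlnD hlnE
end

section
/- Let A be an integral domain which is a ℂ-algebra, and let ∂ be a nonzero locally nilpotent derivation of A. (i) If a₁, a₂ ∈ A satisfy a₁·a₂ ∈ Ker ∂ and a₁·a₂ ≠ 0, then a₁ ∈ Ker ∂ and a₂ ∈ Ker ∂; in particular every unit u of A belongs to Ker ∂. (ii) If a₁, a₂ ∈ A and k, l ≥ 2 are relatively prime natural numbers such that a₁^k + a₂^l ∈ Ker ∂ and a₁^k + a₂^l ≠ 0, then a₁ ∈ Ker ∂ and a₂ ∈ Ker ∂. -/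
open Finset Polynomial UniqueFactorizationMonoid UniqueFactorizationDomain EuclideanDomain

set_option linter.unusedSectionVars false
set_option maxHeartbeats 1000000

section Aux
variable {A : Type*} [CommRing A] [IsDomain A] [Algebra ℂ A] (D : Derivation ℂ A A)

lemma myD_mul (p q : A) : D (p * q) = D p * q + p * D q := by
  rw [D.leibniz]; simp [smul_eq_mul]; ring

lemma iterD_mul (n : ℕ) (p q : A) :
    (⇑D)^[n] (p * q) =
      ∑ k ∈ range (n + 1), n.choose k • ((⇑D)^[n - k] p * (⇑D)^[k] q) := by
  induction n with
  | zero => simp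
  | succ n IH =>
    calc
      (⇑D)^[n + 1] (p * q) =
          D (∑ k ∈ range (n + 1),
              n.choose k • ((⇑D)^[n - k] p * (⇑D)^[k] q)) := by
        rw [Function.iterate_succ_apply', IH]
      _ = (∑ k ∈ range (n + 1),
            n.choose k • ((⇑D)^[n - k + 1] p * (⇑D)^[k] q)) +
          ∑ k ∈ range (n + 1),
            n.choose k • ((⇑D)^[n - k] p * (⇑D)^[k + 1] q) := by
        rw [map_sum]
        simp_rw [map_nsmul, myD_mul, Function.iterate_succ_apply',
          smul_add, sum_add_distrib]
      _ = (∑ k ∈ range (n + 1),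
                n.choose k.succ • ((⇑D)^[n - k] p * (⇑D)^[k + 1] q)) +
              1 • ((⇑D)^[n + 1] p * (⇑D)^[0] q) +
            ∑ k ∈ range (n + 1), n.choose k • ((⇑D)^[n - k] p * (⇑D)^[k + 1] q) :=
        ?_
      _ = ((∑ k ∈ range (n + 1), n.choose k • ((⇑D)^[n - k] p * (⇑D)^[k + 1] q)) +
              ∑ k ∈ range (n + 1),
                n.choose k.succ • ((⇑D)^[n - k] p * (⇑D)^[k + 1] q)) +
            1 • ((⇑D)^[n + 1] p * (⇑D)^[0] q) := by
        rw [add_comm, add_assoc]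
      _ = (∑ i ∈ range (n + 1),
              (n + 1).choose (i + 1) • ((⇑D)^[n + 1 - (i + 1)] p * (⇑D)^[i + 1] q)) +
            1 • ((⇑D)^[n + 1] p * (⇑D)^[0] q) := by
        simp_rw [Nat.choose_succ_succ, Nat.succ_sub_succ, add_smul, sum_add_distrib]
      _ = ∑ k ∈ range (n + 2),
            (n + 1).choose k • ((⇑D)^[n + 1 - k] p * (⇑D)^[k] q) := by
        rw [sum_range_succ' _ (n + 1), Nat.choose_zero_right, tsub_zero]
    congr
    refine (sum_range_succ' _ _).trans (congr_arg₂ (· + ·) ?_ ?_)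
    · rw [sum_range_succ, Nat.choose_succ_self, zero_smul, add_zero]
      refine sum_congr rfl fun k hk => ?_
      rw [mem_range] at hk
      congr
      omega
    · rw [Nat.choose_zero_right, tsub_zero]

lemma iterD_vanish {a : A} {m k : ℕ} (h : (⇑D)^[m] a = 0) (hmk : m ≤ k) :
    (⇑D)^[k] a = 0 := by
  obtain ⟨j, rfl⟩ := Nat.exists_eq_add_of_le hmk
  rw [add_comm, Function.iterate_add_apply, h]
  exact Function.iterate_fixed (map_zero D) j

lemma csmul_eq_zero {q : ℂ} (hq : q ≠ 0) {x : A} (h : q • x = 0) : x = 0 := by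
  have : q⁻¹ • q • x = x := by rw [smul_smul, inv_mul_cancel₀ hq, one_smul]
  rw [h, smul_zero] at this; exact this.symm

variable (hl : ∀ a : A, ∃ k : ℕ, (⇑D)^[k] a = 0)

/-- The "exponential" of the derivation, as a polynomial. -/
noncomputable def phi (a : A) : Polynomial A :=
  ∑ n ∈ range ((hl a).choose), C ((n.factorial : ℂ)⁻¹ • (⇑D)^[n] a) * X ^ n

lemma coeff_phi (a : A) (m : ℕ) :
    (phi D hl a).coeff m = (m.factorial : ℂ)⁻¹ • (⇑D)^[m] a := by
  rw [phi, finset_sum_coeff]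
  simp only [coeff_C_mul, coeff_X_pow, mul_ite, mul_one, mul_zero]
  rw [Finset.sum_ite_eq (range ((hl a).choose)) m]
  split_ifs with h
  · rfl
  · rw [mem_range, not_lt] at h
    rw [iterD_vanish D (hl a).choose_spec h, smul_zero]

lemma coeff_phi_zero (a : A) : (phi D hl a).coeff 0 = a := by
  simp [coeff_phi]

lemma coeff_phi_one (a : A) : (phi D hl a).coeff 1 = D a := by
  simp [coeff_phi]

lemma phi_ne_zero {a : A} (ha : a ≠ 0) : phi D hl a ≠ 0 := fun h => by
  have := coeff_phi_zero D hl a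
  rw [h, coeff_zero] at this; exact ha this.symm

lemma phi_of_ker {a : A} (ha : D a = 0) : phi D hl a = C a := by
  ext m
  rw [coeff_phi, coeff_C]
  match m with
  | 0 => simp
  | (m + 1) =>
    have h1 : (⇑D)^[1] a = 0 := by simpa using ha
    rw [iterD_vanish D h1 (by omega), smul_zero]
    simp

lemma phi_add (a b : A) : phi D hl (a + b) = phi D hl a + phi D hl b := by
  ext m
  simp [coeff_phi, smul_add]

lemma phi_mul (a b : A) : phi D hl (a * b) = phi D hl a * phi D hl b := by
  ext m
  rw [coeff_mul]
  rw [Finset.Nat.sum_antidiagonal_eq_sum_range_succ_mk]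
  simp only [coeff_phi]
  have key : ∀ k ∈ range (m + 1),
      ((k.factorial : ℂ)⁻¹ • (⇑D)^[k] a) * (((m - k).factorial : ℂ)⁻¹ • (⇑D)^[m - k] b)
        = (m.factorial : ℂ)⁻¹ • (m.choose k • ((⇑D)^[m - k] b * (⇑D)^[k] a)) := by
    intro k hk
    rw [mem_range] at hk
    have hk' : k ≤ m := by omega
    rw [smul_mul_smul_comm]
    rw [← Nat.cast_smul_eq_nsmul ℂ, smul_smul]
    congr 1
    · have h := Nat.choose_mul_factorial_mul_factorial hk'
      have h2 : ((m - k).factorial : ℂ) ≠ 0 := by exact_mod_cast (m - k).factorial_ne_zero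
      have h3 : (m.factorial : ℂ) ≠ 0 := by exact_mod_cast m.factorial_ne_zero
      have h1 : (k.factorial : ℂ) ≠ 0 := by exact_mod_cast k.factorial_ne_zero
      field_simp
      exact_mod_cast h.symm.trans (by ring)
    · ring
  rw [Finset.sum_congr rfl key, ← Finset.smul_sum]
  congr 1
  rw [mul_comm a b, iterD_mul]

lemma phi_pow (a : A) (n : ℕ) : phi D hl (a ^ n) = (phi D hl a) ^ n := by
  induction n with
  | zero => simpa using phi_of_ker D hl (D.map_one_eq_zero)
  | succ n ih => rw [pow_succ, pow_succ, phi_mul, ih]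

lemma natDegree_phi_eq_zero {a : A} (h : (phi D hl a).natDegree = 0) : D a = 0 := by
  have : (phi D hl a).coeff 1 = 0 := coeff_eq_zero_of_natDegree_lt (by omega)
  rw [coeff_phi_one] at this; exact this

include hl in
/-- Part (i) core. -/
lemma keyi (a₁ a₂ : A) (h : D (a₁ * a₂) = 0) (hne : a₁ * a₂ ≠ 0) :
    D a₁ = 0 ∧ D a₂ = 0 := by
  have h1 : a₁ ≠ 0 := fun h0 => hne (by rw [h0, zero_mul])
  have h2 : a₂ ≠ 0 := fun h0 => hne (by rw [h0, mul_zero])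
  have hmul : phi D hl a₁ * phi D hl a₂ = C (a₁ * a₂) := by
    rw [← phi_mul, phi_of_ker D hl h]
  have hdeg : (phi D hl a₁).natDegree + (phi D hl a₂).natDegree = 0 := by
    rw [← Polynomial.natDegree_mul (phi_ne_zero D hl h1) (phi_ne_zero D hl h2), hmul,
      natDegree_C]
  exact ⟨natDegree_phi_eq_zero D hl (by omega), natDegree_phi_eq_zero D hl (by omega)⟩



include hl in
/-- Part (ii) core: the Mason–Stothers argument, assuming both derivatives nonzero. -/
lemma keyii (a₁ a₂ : A) (k l : ℕ) (hk : 2 ≤ k) (hle : 2 ≤ l)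
    (hker : D (a₁ ^ k + a₂ ^ l) = 0) (hne : a₁ ^ k + a₂ ^ l ≠ 0)
    (h1 : D a₁ ≠ 0) (h2 : D a₂ ≠ 0) : False := by
  classical
  haveI : CharZero A := charZero_of_injective_algebraMap (algebraMap ℂ A).injective
  set F := FractionRing A
  haveI : CharZero F := charZero_of_injective_algebraMap (IsFractionRing.injective A F)
  have hι : Function.Injective (algebraMap A F) := IsFractionRing.injective A F
  set ψ : Polynomial A →+* Polynomial F := Polynomial.mapRingHom (algebraMap A F) with hψ
  set f : Polynomial F := ψ (phi D hl a₁) with hf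
  set g : Polynomial F := ψ (phi D hl a₂) with hg
  set c' : F := algebraMap A F (a₁ ^ k + a₂ ^ l) with hc'
  have hc'0 : c' ≠ 0 := fun h => hne (hι (by rwa [map_zero]))
  -- the key polynomial identity
  have hsum : f ^ k + g ^ l = C c' := by
    rw [hf, hg, ← map_pow, ← map_pow, ← map_add, ← phi_pow, ← phi_pow, ← phi_add,
      phi_of_ker D hl hker]
    simp [hψ, hc']
  -- nonvanishing and degrees
  have hf0 : f ≠ 0 := by
    rw [hf, hψ, coe_mapRingHom, Polynomial.map_ne_zero_iff hι]
    exact phi_ne_zero D hl (fun h => h1 (by rw [h, map_zero]))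
  have hg0 : g ≠ 0 := by
    rw [hg, hψ, coe_mapRingHom, Polynomial.map_ne_zero_iff hι]
    exact phi_ne_zero D hl (fun h => h2 (by rw [h, map_zero]))
  have hdf : f.natDegree = (phi D hl a₁).natDegree := by
    rw [hf, hψ, coe_mapRingHom]; exact natDegree_map_eq_of_injective hι _
  have hdg : g.natDegree = (phi D hl a₂).natDegree := by
    rw [hg, hψ, coe_mapRingHom]; exact natDegree_map_eq_of_injective hι _
  have hd1 : 1 ≤ f.natDegree := by
    rw [hdf]
    exact le_natDegree_of_ne_zero (by rw [coeff_phi_one]; exact h1)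
  have hd2 : 1 ≤ g.natDegree := by
    rw [hdg]
    exact le_natDegree_of_ne_zero (by rw [coeff_phi_one]; exact h2)
  -- coprimality
  have hab : IsCoprime (f ^ k) (g ^ l) :=
    ⟨C c'⁻¹, C c'⁻¹, by
      rw [← mul_add, hsum, ← C_mul, inv_mul_cancel₀ hc'0, C_1]⟩
  have hbc : IsCoprime (g ^ l) (-(C c')) :=
    ⟨0, -(C c'⁻¹), by
      rw [zero_mul, zero_add, neg_mul_neg (C c'⁻¹) (C c'), ← C_mul,
        inv_mul_cancel₀ hc'0, map_one]⟩
  have hca : IsCoprime (-(C c')) (f ^ k) :=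
    ⟨-(C c'⁻¹), 0, by
      rw [zero_mul, add_zero, neg_mul_neg (C c'⁻¹) (C c'), ← C_mul,
        inv_mul_cancel₀ hc'0, map_one]⟩
  have hC0 : -(C c') ≠ (0 : Polynomial F) := by
    simpa using hc'0
  have habc := Polynomial.abc (pow_ne_zero k hf0) (pow_ne_zero l hg0) hC0 hab
    (by rw [hsum]; ring)
  rcases habc with ⟨H1, H2, -⟩ | ⟨H1, -, -⟩
  · -- radical degree bound
    have hu : IsUnit (-(C c')) := (isUnit_C.mpr hc'0.isUnit).neg
    obtain ⟨u, hu⟩ := hu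
    have hrad : radical (f ^ k * g ^ l * -(C c')) = radical f * radical g := by
      rw [← hu, radical_mul_of_isUnit_right u.isUnit, radical_mul hab.isRelPrime, radical_pow f (by omega : k ≠ 0),
        radical_pow g (by omega : l ≠ 0)]
    have hbound : (radical (f ^ k * g ^ l * -(C c'))).natDegree ≤ f.natDegree + g.natDegree := by
      rw [hrad, Polynomial.natDegree_mul (radical_ne_zero (a := f)) (radical_ne_zero (a := g))]
      exact Nat.add_le_add (Polynomial.natDegree_le_of_dvd (radical_dvd_self (a := f)) hf0)
        (Polynomial.natDegree_le_of_dvd (radical_dvd_self (a := g)) hg0)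
    rw [natDegree_pow] at H1 H2
    have e1 : 2 * f.natDegree ≤ k * f.natDegree := Nat.mul_le_mul_right _ hk
    have e2 : 2 * g.natDegree ≤ l * g.natDegree := Nat.mul_le_mul_right _ hle
    omega
  · -- derivative of f^k vanishes: impossible in char zero
    have := natDegree_eq_zero_of_derivative_eq_zero H1
    rw [natDegree_pow] at this
    have : f.natDegree = 0 := by
      rcases Nat.mul_eq_zero.mp this with h | h
      · omega
      · exact h
    omega



end Aux

/-- **Theorem 5.1(4),(5)**: let `A` be a domain over `ℂ` and `∂` a nonzero locally
nilpotent derivation of `A`.  (i) If `a₁·a₂ ∈ Ker ∂ \ {0}` then `a₁, a₂ ∈ Ker ∂`; in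
particular every unit of `A` lies in `Ker ∂`.  (ii) If `a₁^k + a₂^l ∈ Ker ∂ \ {0}` with
`k, l ≥ 2` relatively prime, then `a₁, a₂ ∈ Ker ∂`. -/
theorem stmt19 (A : Type*) [CommRing A] [IsDomain A] [Algebra ℂ A]
    (D : Derivation ℂ A A) (hD : D ≠ 0)
    (hln : ∀ a : A, ∃ k : ℕ, (D.toLinearMap ^ k) a = 0) :
    (∀ a₁ a₂ : A, D (a₁ * a₂) = 0 → a₁ * a₂ ≠ 0 → D a₁ = 0 ∧ D a₂ = 0) ∧
    (∀ u : A, IsUnit u → D u = 0) ∧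
    (∀ (a₁ a₂ : A) (k l : ℕ), 2 ≤ k → 2 ≤ l → Nat.Coprime k l →
      D (a₁ ^ k + a₂ ^ l) = 0 → a₁ ^ k + a₂ ^ l ≠ 0 → D a₁ = 0 ∧ D a₂ = 0) := by
  have hl : ∀ a : A, ∃ k : ℕ, (⇑D)^[k] a = 0 := fun a =>
    (hln a).imp fun k hk => by simpa [Module.End.pow_apply] using hk
  refine ⟨keyi D hl, ?_, ?_⟩
  · intro u hu
    obtain ⟨v, rfl⟩ := hu
    exact (keyi D hl (↑v) (↑v⁻¹)
      (by rw [Units.mul_inv]; exact D.map_one_eq_zero)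
      (by rw [Units.mul_inv]; exact one_ne_zero)).1
  · intro a₁ a₂ k l hk hle hcop hker hne
    by_cases h1 : D a₁ = 0 <;> by_cases h2 : D a₂ = 0
    · exact ⟨h1, h2⟩
    · -- D a₁ = 0, D a₂ ≠ 0 : contradiction
      exfalso
      have hp1 : D (a₁ ^ k) = 0 := by rw [D.leibniz_pow, h1, smul_zero, smul_zero]
      have hp2 : D (a₂ ^ l) = 0 := by
        have := map_add D (a₁ ^ k) (a₂ ^ l)
        rw [hker, hp1, zero_add] at this
        exact this.symm
      have ha2 : a₂ ≠ 0 := fun h0 => h2 (by rw [h0, map_zero])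
      have hfac : a₂ * a₂ ^ (l - 1) = a₂ ^ l := by
        rw [← pow_succ']; congr 1; omega
      exact h2 (keyi D hl a₂ (a₂ ^ (l - 1)) (by rw [hfac]; exact hp2)
        (by rw [hfac]; exact pow_ne_zero l ha2)).1
    · -- D a₂ = 0, D a₁ ≠ 0 : contradiction
      exfalso
      have hp2 : D (a₂ ^ l) = 0 := by rw [D.leibniz_pow, h2, smul_zero, smul_zero]
      have hp1 : D (a₁ ^ k) = 0 := by
        have := map_add D (a₁ ^ k) (a₂ ^ l)
        rw [hker, hp2, add_zero] at this
        exact this.symm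
      have ha1 : a₁ ≠ 0 := fun h0 => h1 (by rw [h0, map_zero])
      have hfac : a₁ * a₁ ^ (k - 1) = a₁ ^ k := by
        rw [← pow_succ']; congr 1; omega
      exact h1 (keyi D hl a₁ (a₁ ^ (k - 1)) (by rw [hfac]; exact hp1)
        (by rw [hfac]; exact pow_ne_zero k ha1)).1
    · exact (keyii D hl a₁ a₂ k l hk hle hker hne h1 h2).elim
end
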